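/- arXiv:2508.09841 — 5 statements merged into one kernel-verified Lean document; each statement's English description precedes it below -/
import Mathlib

section
/- Let H be a linear 3-uniform hypergraph on n vertices with m edges satisfying 3m/binom(n,2) ≥ δ for some 0 < δ ≤ 1, and suppose n ≥ 12/δ. Then the number of unordered pairs of intersecting edges of H is at least δ²n³/16. -/
open Finset

variable {V : Type*} [Fintype V] [DecidableEq V]

/-- The number of unordered pairs of hyperedges intersecting in exactly one vertex. -/
def pairCount (E : Finset (Finset V)) : ℕ :=
  ((E.powersetCard 2).filter fun s =>
    ∃ e ∈ s, ∃ f ∈ s, e ≠ f ∧ (e ∩ f).card = 1).card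

theorem stmt_6 (E : Finset (Finset V)) (δ : ℝ)
    (huniform : ∀ e ∈ E, e.card = 3)
    (hlinear : ∀ e ∈ E, ∀ f ∈ E, e ≠ f → (e ∩ f).card ≤ 1)
    (hδ0 : 0 < δ) (hδ1 : δ ≤ 1)
    (hdens : (3 * E.card : ℝ) / ((Fintype.card V).choose 2) ≥ δ)
    (hn : (Fintype.card V : ℝ) ≥ 12 / δ) :
    (pairCount E : ℝ) ≥ δ ^ 2 * (Fintype.card V : ℝ) ^ 3 / 16 := by
  classical
  set d : V → ℕ := fun v => (E.filter (fun e => v ∈ e)).card with hd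
  have hc : ∀ e f : Finset V, (e ∩ f).card =
      ∑ v : V, (if v ∈ e then 1 else 0) * (if v ∈ f then 1 else 0) := by
    intro e f
    rw [← Finset.filter_univ_mem (e ∩ f), Finset.card_filter]
    refine Finset.sum_congr rfl fun v _ => ?_
    by_cases h1 : v ∈ e <;> by_cases h2 : v ∈ f <;> simp [h1, h2]
  have hdcard : ∀ v : V, d v = ∑ e ∈ E, (if v ∈ e then 1 else 0) :=
    fun v => Finset.card_filter _ _
  have hsumd : ∑ v : V, d v = ∑ e ∈ E, e.card := by
    simp only [hdcard]
    rw [Finset.sum_comm]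
    refine Finset.sum_congr rfl fun e _ => ?_
    rw [← Finset.card_filter, Finset.filter_univ_mem]
  -- total sum over ordered pairs
  have hT : ∑ p ∈ E ×ˢ E, (p.1 ∩ p.2).card = ∑ v : V, d v ^ 2 := by
    rw [Finset.sum_product]
    have step : ∀ v : V, d v ^ 2 =
        ∑ e ∈ E, ∑ f ∈ E, (if v ∈ e then (1:ℕ) else 0) * (if v ∈ f then 1 else 0) := by
      intro v
      rw [sq, hdcard, Finset.sum_mul_sum]
    calc ∑ e ∈ E, ∑ f ∈ E, (e ∩ f).card
        = ∑ e ∈ E, ∑ f ∈ E, ∑ v : V,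
            (if v ∈ e then (1:ℕ) else 0) * (if v ∈ f then 1 else 0) :=
          Finset.sum_congr rfl fun e _ => Finset.sum_congr rfl fun f _ => hc e f
      _ = ∑ e ∈ E, ∑ v : V, ∑ f ∈ E,
            (if v ∈ e then (1:ℕ) else 0) * (if v ∈ f then 1 else 0) :=
          Finset.sum_congr rfl fun e _ => Finset.sum_comm
      _ = ∑ v : V, ∑ e ∈ E, ∑ f ∈ E,
            (if v ∈ e then (1:ℕ) else 0) * (if v ∈ f then 1 else 0) := Finset.sum_comm
      _ = ∑ v : V, d v ^ 2 := Finset.sum_congr rfl fun v _ => (step v).symm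
  -- diagonal sum
  have hdiag_set : (E ×ˢ E).filter (fun p => p.1 = p.2) = E.image (fun e => (e, e)) := by
    ext p
    simp only [Finset.mem_filter, Finset.mem_product, Finset.mem_image]
    constructor
    · rintro ⟨⟨h1, h2⟩, h3⟩
      exact ⟨p.1, h1, Prod.ext rfl h3⟩
    · rintro ⟨e, he, rfl⟩
      exact ⟨⟨he, he⟩, rfl⟩
  have hdiag : ∑ p ∈ (E ×ˢ E).filter (fun p => p.1 = p.2), (p.1 ∩ p.2).card
      = ∑ e ∈ E, e.card := by
    rw [hdiag_set, Finset.sum_image (by intro a _ b _ h; exact congrArg Prod.fst h)]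
    simp
  -- off-diagonal sum counts intersecting ordered pairs
  have hoff1 : ∑ p ∈ (E ×ˢ E).filter (fun p => p.1 ≠ p.2), (p.1 ∩ p.2).card
      = ((E ×ˢ E).filter (fun p => p.1 ≠ p.2 ∧ (p.1 ∩ p.2).card = 1)).card := by
    rw [← Finset.filter_filter, Finset.card_filter]
    refine Finset.sum_congr rfl fun p hp => ?_
    simp only [Finset.mem_filter, Finset.mem_product] at hp
    have hle := hlinear p.1 hp.1.1 p.2 hp.1.2 hp.2
    rcases Nat.le_one_iff_eq_zero_or_eq_one.mp hle with h | h <;> simp [h]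
  -- ordered intersecting pairs = 2 * pairCount
  have hDP : ((E ×ˢ E).filter (fun p => p.1 ≠ p.2 ∧ (p.1 ∩ p.2).card = 1)).card
      = 2 * pairCount E := by
    set P := (E.powersetCard 2).filter
      (fun s => ∃ e ∈ s, ∃ f ∈ s, e ≠ f ∧ (e ∩ f).card = 1) with hP
    have hmap : ∀ p ∈ (E ×ˢ E).filter (fun p => p.1 ≠ p.2 ∧ (p.1 ∩ p.2).card = 1),
        ({p.1, p.2} : Finset (Finset V)) ∈ P := by
      intro p hp
      simp only [Finset.mem_filter, Finset.mem_product] at hp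
      refine Finset.mem_filter.mpr ⟨Finset.mem_powersetCard.mpr ⟨?_, Finset.card_pair hp.2.1⟩,
        p.1, by simp, p.2, by simp, hp.2.1, hp.2.2⟩
      intro x hx
      rcases Finset.mem_insert.mp hx with rfl | hx
      · exact hp.1.1
      · rw [Finset.mem_singleton.mp hx]; exact hp.1.2
    rw [Finset.card_eq_sum_card_fiberwise hmap]
    have hfib : ∀ s ∈ P,
        (((E ×ˢ E).filter (fun p => p.1 ≠ p.2 ∧ (p.1 ∩ p.2).card = 1)).filter
          (fun p => ({p.1, p.2} : Finset (Finset V)) = s)).card = 2 := by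
      intro s hs
      obtain ⟨hsP, e, he, f, hf, hef, hc1⟩ := Finset.mem_filter.mp hs
      obtain ⟨hsub, hcard2⟩ := Finset.mem_powersetCard.mp hsP
      have hefs : ({e, f} : Finset (Finset V)) ⊆ s := by
        intro x hx
        rcases Finset.mem_insert.mp hx with rfl | hx
        · exact he
        · rw [Finset.mem_singleton.mp hx]; exact hf
      have hs_eq : s = {e, f} :=
        (Finset.eq_of_subset_of_card_le hefs (by rw [hcard2, Finset.card_pair hef])).symm
      have heE : e ∈ E := hsub he
      have hfE : f ∈ E := hsub hf
      have hset : (((E ×ˢ E).filter (fun p => p.1 ≠ p.2 ∧ (p.1 ∩ p.2).card = 1)).filter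
          (fun p => ({p.1, p.2} : Finset (Finset V)) = s)) = {(e, f), (f, e)} := by
        ext p
        simp only [Finset.mem_filter, Finset.mem_product, Finset.mem_insert,
          Finset.mem_singleton]
        constructor
        · rintro ⟨⟨⟨h1, h2⟩, hne, hone⟩, hps⟩
          have hp1 : p.1 = e ∨ p.1 = f := by
            have : p.1 ∈ ({e, f} : Finset (Finset V)) := by
              rw [← hs_eq, ← hps]; simp
            simpa using this
          have hp2 : p.2 = e ∨ p.2 = f := by
            have : p.2 ∈ ({e, f} : Finset (Finset V)) := by
              rw [← hs_eq, ← hps]; simp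
            simpa using this
          rcases hp1 with h | h <;> rcases hp2 with h' | h'
          · exact absurd (h.trans h'.symm) hne
          · exact Or.inl (Prod.ext h h')
          · exact Or.inr (Prod.ext h h')
          · exact absurd (h.trans h'.symm) hne
        · rintro (rfl | rfl)
          · exact ⟨⟨⟨heE, hfE⟩, hef, hc1⟩, hs_eq.symm⟩
          · exact ⟨⟨⟨hfE, heE⟩, hef.symm, by rwa [Finset.inter_comm]⟩,
              by rw [hs_eq, Finset.pair_comm]⟩
      rw [hset, Finset.card_insert_of_notMem (fun hmem => by
        rw [Finset.mem_singleton] at hmem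
        exact hef (congrArg Prod.fst hmem)), Finset.card_singleton]
    rw [Finset.sum_congr rfl hfib, Finset.sum_const, smul_eq_mul, mul_comm]
    rfl
  -- combine into the key identity
  have hsplit := Finset.sum_filter_add_sum_filter_not (E ×ˢ E) (fun p => p.1 = p.2)
    (fun p => (p.1 ∩ p.2).card)
  have hkey : ∑ v : V, d v ^ 2 = 2 * pairCount E + ∑ v : V, d v := by
    have hne : ∑ p ∈ (E ×ˢ E).filter (fun p => ¬ p.1 = p.2), (p.1 ∩ p.2).card
        = 2 * pairCount E := hoff1.trans hDP
    rw [← hT, ← hsplit, hne, hdiag, hsumd]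
    omega
  have hm3 : ∑ e ∈ E, e.card = 3 * E.card := by
    rw [Finset.sum_congr rfl huniform, Finset.sum_const, smul_eq_mul, mul_comm]
  -- now move to ℝ
  set N : ℝ := (Fintype.card V : ℝ) with hN
  set m : ℝ := (E.card : ℝ) with hm
  have hsumdR : ∑ v : V, (d v : ℝ) = 3 * m := by
    rw [hm, ← Nat.cast_ofNat, ← Nat.cast_mul, ← hm3, ← hsumd]
    push_cast
    rfl
  have hkeyR : ∑ v : V, (d v : ℝ) ^ 2 = 2 * (pairCount E : ℝ) + 3 * m := by
    rw [← hsumdR]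
    exact_mod_cast congrArg (Nat.cast : ℕ → ℝ) hkey
  have hCS : (∑ v : V, (d v : ℝ)) ^ 2 ≤ N * ∑ v : V, (d v : ℝ) ^ 2 := by
    have := sq_sum_le_card_mul_sum_sq (s := (Finset.univ : Finset V))
      (f := fun v => (d v : ℝ))
    simpa [Finset.card_univ, hN] using this
  have hN12 : (12 : ℝ) ≤ N := by
    have h12 : (12 : ℝ) ≤ 12 / δ := by
      rw [le_div_iff₀ hδ0]; nlinarith
    linarith [hn]
  have hch : ((Fintype.card V).choose 2 : ℝ) = N * (N - 1) / 2 := by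
    rw [Nat.cast_choose_two]
  have hCpos : (0 : ℝ) < ((Fintype.card V).choose 2 : ℝ) := by
    rw [hch]; nlinarith
  have hS : δ * (N * (N - 1) / 2) ≤ 3 * m := by
    have := (le_div_iff₀ hCpos).mp hdens
    rw [hch] at this
    linarith
  have hδN : (12 : ℝ) ≤ δ * N := by
    rw [ge_iff_le, div_le_iff₀ hδ0] at hn
    linarith
  have hP2 : (3 * m) ^ 2 ≤ N * (2 * (pairCount E : ℝ) + 3 * m) := by
    rw [← hkeyR, ← hsumdR]; exact hCS
  clear hc hdcard hsumd hT hdiag_set hdiag hoff1 hDP hsplit hkey hCS hsumdR hkeyR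
  clear hm3 huniform hlinear hdens hn hch hCpos hd
  -- final algebra
  have hS' : δ * N * (N - 1) / 2 ≤ 3 * m := by
    have : δ * (N * (N - 1) / 2) = δ * N * (N - 1) / 2 := by ring
    linarith
  clear hS
  have hb0 : (0 : ℝ) ≤ δ * N * (N - 1) / 2 - N := by
    have hx : 12 * (N - 1) ≤ δ * N * (N - 1) :=
      mul_le_mul_of_nonneg_right hδN (by linarith)
    linarith
  have hSN : δ * N * (N - 1) / 2 - N ≤ 3 * m - N := by linarith
  have hmul : (δ * N * (N - 1) / 2) * (δ * N * (N - 1) / 2 - N) ≤ (3 * m) * (3 * m - N) := by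
    have h3m : (0 : ℝ) ≤ 3 * m := by linarith
    exact mul_le_mul hS' hSN hb0 h3m
  have hfinal : δ ^ 2 * N ^ 4 / 8 ≤ (δ * N * (N - 1) / 2) * (δ * N * (N - 1) / 2 - N) := by
    nlinarith [mul_nonneg (by linarith : (0:ℝ) ≤ δ * N - 12) (by linarith : (0:ℝ) ≤ N),
      mul_nonneg (mul_nonneg (by linarith : (0:ℝ) ≤ 1 - δ) (by linarith : (0:ℝ) ≤ N)) (by linarith : (0:ℝ) ≤ N),
      mul_nonneg (mul_nonneg (by linarith : (0:ℝ) ≤ δ * N - 12) (by linarith : (0:ℝ) ≤ N)) (by linarith : (0:ℝ) ≤ N),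
      sq_nonneg (δ * N - 12)]
  have h16 : δ ^ 2 * N ^ 3 * N ≤ 16 * (pairCount E : ℝ) * N := by nlinarith
  have hNpos : (0 : ℝ) < N := by linarith
  have := le_of_mul_le_mul_right h16 hNpos
  linarith
end

section
/- Let H be a linear 3-uniform hypergraph with underlying graph U. Then 4·|B| ≤ κ_∧(U), where |B| is the number of unordered pairs of hyperedges of H intersecting in exactly one vertex, and κ_∧(U) is the number of cherries in U. -/
set_option linter.unusedSectionVars false
open Finset
variable {V : Type*} [Fintype V] [DecidableEq V]

/-- The number of cherries (unordered pairs of distinct edges sharing a vertex) in `G`. -/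
def cherryCount (G : SimpleGraph V) [DecidableRel G.Adj] : ℕ :=
  ((G.edgeFinset.powersetCard 2).filter fun s =>
    ∃ e ∈ s, ∃ f ∈ s, e ≠ f ∧ ∃ v, v ∈ e ∧ v ∈ f).card

def Fp (e f : Finset V) : Finset (Finset (Sym2 V)) :=
  ((e ∩ f) ×ˢ ((e \ f) ×ˢ (f \ e))).image fun q => {s(q.1, q.2.1), s(q.1, q.2.2)}

lemma mem_Fp {e f : Finset V} {c : Finset (Sym2 V)} :
    c ∈ Fp e f ↔ ∃ v x y, (v ∈ e ∧ v ∈ f) ∧ (x ∈ e ∧ x ∉ f) ∧ (y ∈ f ∧ y ∉ e) ∧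
      c = {s(v, x), s(v, y)} := by
  simp only [Fp, mem_image, mem_product, mem_inter, mem_sdiff, Prod.exists]
  constructor
  · rintro ⟨v, x, y, ⟨hv, hx, hy⟩, rfl⟩
    exact ⟨v, x, y, hv, hx, hy, rfl⟩
  · rintro ⟨v, x, y, hv, hx, hy, rfl⟩
    exact ⟨v, x, y, ⟨hv, hx, hy⟩, rfl⟩

lemma Fp_self (e : Finset V) : Fp e e = ∅ := by
  simp [Fp]

lemma Fp_comm (e f : Finset V) : Fp e f = Fp f e := by
  ext c
  rw [mem_Fp, mem_Fp]
  constructor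
  · rintro ⟨v, x, y, hv, hx, hy, rfl⟩
    exact ⟨v, y, x, ⟨hv.2, hv.1⟩, hy, hx, Finset.pair_comm _ _⟩
  · rintro ⟨v, x, y, hv, hx, hy, rfl⟩
    exact ⟨v, y, x, ⟨hv.2, hv.1⟩, hy, hx, Finset.pair_comm _ _⟩

/-- two hyperedges sharing two distinct vertices are equal -/
lemma edge_eq {E : Finset (Finset V)}
    (hlinear : ∀ e ∈ E, ∀ f ∈ E, e ≠ f → (e ∩ f).card ≤ 1)
    {e e' : Finset V} (he : e ∈ E) (he' : e' ∈ E) {v x : V}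
    (hv : v ∈ e) (hx : x ∈ e) (hv' : v ∈ e') (hx' : x ∈ e') (hvx : v ≠ x) : e = e' := by
  by_contra h
  have h2 : ({v, x} : Finset V) ⊆ e ∩ e' := by
    intro a ha
    simp only [mem_insert, mem_singleton] at ha
    rcases ha with rfl | rfl <;> simp_all
  have := (Finset.card_le_card h2).trans (hlinear e he e' he' h)
  rw [Finset.card_pair hvx] at this
  omega

lemma Fp_card {E : Finset (Finset V)} (huniform : ∀ e ∈ E, e.card = 3)
    {e f : Finset V} (he : e ∈ E) (hf : f ∈ E) (hef : (e ∩ f).card = 1) :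
    (Fp e f).card = 4 := by
  obtain ⟨v, hv⟩ := Finset.card_eq_one.mp hef
  have hxc : (e \ f).card = 2 := by
    have h1 := Finset.card_inter_add_card_sdiff e f
    have := huniform e he; omega
  have hyc : (f \ e).card = 2 := by
    have h1 := Finset.card_inter_add_card_sdiff f e
    rw [Finset.inter_comm] at h1
    have := huniform f hf; omega
  rw [Fp, Finset.card_image_of_injOn, card_product, card_product, hef, hxc, hyc]
  rintro ⟨v1, x1, y1⟩ hm1 ⟨v2, x2, y2⟩ hm2 heq
  simp only [Finset.mem_coe, mem_product, mem_inter, mem_sdiff] at hm1 hm2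
  simp only [Prod.mk.injEq] at heq ⊢
  obtain ⟨⟨hv1e, hv1f⟩, ⟨hx1e, hx1f⟩, hy1f, hy1e⟩ := hm1
  obtain ⟨⟨hv2e, hv2f⟩, ⟨hx2e, hx2f⟩, hy2f, hy2e⟩ := hm2
  have hv1 : v1 = v := by have : v1 ∈ e ∩ f := mem_inter.mpr ⟨hv1e, hv1f⟩; rw [hv] at this; simpa using this
  have hv2 : v2 = v := by have : v2 ∈ e ∩ f := mem_inter.mpr ⟨hv2e, hv2f⟩; rw [hv] at this; simpa using this
  have hve : v ∈ e := hv1 ▸ hv1e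
  have hvf : v ∈ f := hv1 ▸ hv1f
  rw [hv1, hv2] at heq
  have h1 : s(v, x1) ∈ ({s(v, x2), s(v, y2)} : Finset (Sym2 V)) := by
    rw [← heq]; simp
  have h2 : s(v, y1) ∈ ({s(v, x2), s(v, y2)} : Finset (Sym2 V)) := by
    rw [← heq]; simp
  simp only [mem_insert, mem_singleton, Sym2.eq_iff] at h1 h2
  have hx : x1 = x2 := by
    rcases h1 with (⟨_, h⟩ | ⟨h, _⟩) | (⟨_, h⟩ | ⟨h, _⟩)
    · exact h
    · exact absurd h (by rintro rfl; exact hx2f hvf)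
    · exact absurd h (by rintro rfl; exact hx1f hy2f)
    · exact absurd h (by rintro rfl; exact hy2e hve)
  have hy : y1 = y2 := by
    rcases h2 with (⟨_, h⟩ | ⟨h, _⟩) | (⟨_, h⟩ | ⟨h, _⟩)
    · exact absurd h (by rintro rfl; exact hy1e hx2e)
    · exact absurd h (by rintro rfl; exact hx2f hvf)
    · exact h
    · exact absurd h (by rintro rfl; exact hy2e hve)
  simp [hx, hy, hv1.trans hv2.symm]

lemma pair_cases {α : Type*} [DecidableEq α] {a b c d : α}
    (h : ({a, b} : Finset α) = {c, d}) (hcd : c ≠ d) :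
    (a = c ∧ b = d) ∨ (a = d ∧ b = c) := by
  have ha : a ∈ ({c, d} : Finset α) := by rw [← h]; simp
  have hb : b ∈ ({c, d} : Finset α) := by rw [← h]; simp
  have hc : c ∈ ({a, b} : Finset α) := by rw [h]; simp
  have hd : d ∈ ({a, b} : Finset α) := by rw [h]; simp
  simp only [mem_insert, mem_singleton] at ha hb hc hd
  rcases ha with rfl | rfl
  · rcases hb with rfl | rfl
    · rcases hd with rfl | rfl <;> simp_all
    · exact Or.inl ⟨rfl, rfl⟩
  · rcases hb with rfl | rfl
    · exact Or.inr ⟨rfl, rfl⟩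
    · rcases hc with rfl | rfl <;> simp_all

/-- orientation lemma: matched Sym2 equalities force equal hyperedges -/
lemma orient {E : Finset (Finset V)}
    (hlinear : ∀ e ∈ E, ∀ f ∈ E, e ≠ f → (e ∩ f).card ≤ 1)
    {e f e' f' : Finset V} (he : e ∈ E) (hf : f ∈ E) (he' : e' ∈ E) (hf' : f' ∈ E)
    {v x y v' x' y' : V}
    (hve : v ∈ e) (hvf : v ∈ f) (hxe : x ∈ e) (hxf : x ∉ f) (hyf : y ∈ f) (hye : y ∉ e)
    (hv'e : v' ∈ e') (hv'f : v' ∈ f') (hx'e : x' ∈ e') (hx'f : x' ∉ f')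
    (hy'f : y' ∈ f') (hy'e : y' ∉ e')
    (eq1 : s(v, x) = s(v', x')) (eq2 : s(v, y) = s(v', y')) : e = e' ∧ f = f' := by
  rcases Sym2.eq_iff.mp eq1 with ⟨rfl, rfl⟩ | ⟨rfl, rfl⟩
  · have hee : e = e' := edge_eq hlinear he he' hve hxe hv'e hx'e
      (by rintro rfl; exact hxf hvf)
    refine ⟨hee, ?_⟩
    rcases Sym2.eq_iff.mp eq2 with ⟨-, rfl⟩ | ⟨rfl, rfl⟩
    · exact edge_eq hlinear hf hf' hvf hyf hv'f hy'f (by rintro rfl; exact hye hve)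
    · exact absurd (hee ▸ hve) hy'e
  · rcases Sym2.eq_iff.mp eq2 with ⟨rfl, -⟩ | ⟨-, rfl⟩
    · exact absurd hvf hxf
    · exact absurd hxe hye

lemma Fp_key {E : Finset (Finset V)}
    (hlinear : ∀ e ∈ E, ∀ f ∈ E, e ≠ f → (e ∩ f).card ≤ 1)
    {e f e' f' : Finset V} (he : e ∈ E) (hf : f ∈ E) (he' : e' ∈ E) (hf' : f' ∈ E)
    {c : Finset (Sym2 V)} (h1 : c ∈ Fp e f) (h2 : c ∈ Fp e' f') :
    ({e, f} : Finset (Finset V)) = {e', f'} := by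
  rw [mem_Fp] at h1 h2
  obtain ⟨v, x, y, ⟨hve, hvf⟩, ⟨hxe, hxf⟩, ⟨hyf, hye⟩, rfl⟩ := h1
  obtain ⟨v', x', y', ⟨hv'e, hv'f⟩, ⟨hx'e, hx'f⟩, ⟨hy'f, hy'e⟩, heq⟩ := h2
  have hne' : s(v', x') ≠ s(v', y') := by
    intro h
    rcases Sym2.eq_iff.mp h with ⟨-, h'⟩ | ⟨h', -⟩
    · exact hx'f (h' ▸ hy'f)
    · exact hy'e (h' ▸ hv'e)
  rcases pair_cases heq hne' with ⟨hA, hB⟩ | ⟨hA, hB⟩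
  · obtain ⟨hee, hff⟩ := orient hlinear he hf he' hf' hve hvf hxe hxf hyf hye
      hv'e hv'f hx'e hx'f hy'f hy'e hA hB
    rw [hee, hff]
  · obtain ⟨hee, hff⟩ := orient hlinear he hf hf' he' hve hvf hxe hxf hyf hye
      hv'f hv'e hy'f hy'e hx'e hx'f hA hB
    rw [hee, hff, Finset.pair_comm]

lemma Fp_subset {E : Finset (Finset V)} (U : SimpleGraph V) [DecidableRel U.Adj]
    (hU : ∀ u v : V, U.Adj u v ↔ u ≠ v ∧ ∃ e ∈ E, u ∈ e ∧ v ∈ e)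
    {e f : Finset V} (he : e ∈ E) (hf : f ∈ E) :
    Fp e f ⊆ (U.edgeFinset.powersetCard 2).filter fun s =>
      ∃ a ∈ s, ∃ b ∈ s, a ≠ b ∧ ∃ v, v ∈ a ∧ v ∈ b := by
  intro c hc
  rw [mem_Fp] at hc
  obtain ⟨v, x, y, ⟨hve, hvf⟩, ⟨hxe, hxf⟩, ⟨hyf, hye⟩, rfl⟩ := hc
  have hax : U.Adj v x := (hU v x).mpr ⟨fun h => hxf (h ▸ hvf), e, he, hve, hxe⟩
  have hay : U.Adj v y := (hU v y).mpr ⟨fun h => hye (h ▸ hve), f, hf, hvf, hyf⟩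
  have hne : s(v, x) ≠ s(v, y) := by
    intro h
    rcases Sym2.eq_iff.mp h with ⟨-, h'⟩ | ⟨h', -⟩
    · exact hxf (h' ▸ hyf)
    · exact hye (h' ▸ hve)
  refine mem_filter.mpr ⟨mem_powersetCard.mpr ⟨?_, ?_⟩,
    s(v, x), by simp, s(v, y), by simp, hne, v, by simp, by simp⟩
  · intro a ha
    simp only [mem_insert, mem_singleton] at ha
    rcases ha with rfl | rfl
    · exact SimpleGraph.mem_edgeFinset.mpr hax
    · exact SimpleGraph.mem_edgeFinset.mpr hay
  · exact card_pair hne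

def Fpair (p : Finset (Finset V)) : Finset (Finset (Sym2 V)) :=
  p.sup fun e => p.sup fun f => Fp e f

lemma mem_Fpair {p : Finset (Finset V)} {c : Finset (Sym2 V)} :
    c ∈ Fpair p ↔ ∃ e ∈ p, ∃ f ∈ p, c ∈ Fp e f := by
  simp [Fpair, Finset.mem_sup]

lemma Fpair_pair {e f : Finset V} : Fpair {e, f} = Fp e f := by
  ext c
  rw [mem_Fpair]
  constructor
  · rintro ⟨a, ha, b, hb, h⟩
    simp only [mem_insert, mem_singleton] at ha hb
    rcases ha with rfl | rfl <;> rcases hb with rfl | rfl <;>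
      first
        | exact h
        | (rw [Fp_self] at h; exact absurd h (notMem_empty c))
        | (rwa [Fp_comm] at h)
  · intro h
    exact ⟨e, by simp, f, by simp, h⟩

theorem stmt_8 (E : Finset (Finset V)) (U : SimpleGraph V) [DecidableRel U.Adj]
    (huniform : ∀ e ∈ E, e.card = 3)
    (hlinear : ∀ e ∈ E, ∀ f ∈ E, e ≠ f → (e ∩ f).card ≤ 1)
    (hU : ∀ u v : V, U.Adj u v ↔ u ≠ v ∧ ∃ e ∈ E, u ∈ e ∧ v ∈ e) :
    4 * pairCount E ≤ cherryCount U := by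
  classical
  set P := (E.powersetCard 2).filter (fun s =>
    ∃ e ∈ s, ∃ f ∈ s, e ≠ f ∧ (e ∩ f).card = 1) with hPdef
  set C := ((U.edgeFinset.powersetCard 2).filter fun s =>
    ∃ e ∈ s, ∃ f ∈ s, e ≠ f ∧ ∃ v, v ∈ e ∧ v ∈ f) with hCdef
  have hrep : ∀ p ∈ P, ∃ e f, e ∈ E ∧ f ∈ E ∧ e ≠ f ∧ (e ∩ f).card = 1 ∧ p = {e, f} := by
    intro p hp
    rw [hPdef, mem_filter, mem_powersetCard] at hp
    obtain ⟨⟨hsub, hcard⟩, e, hep, f, hfp, hne, hone⟩ := hp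
    refine ⟨e, f, hsub hep, hsub hfp, hne, hone, ?_⟩
    have hss : ({e, f} : Finset (Finset V)) ⊆ p := by
      intro a ha
      simp only [mem_insert, mem_singleton] at ha
      rcases ha with rfl | rfl <;> assumption
    exact (Finset.eq_of_subset_of_card_le hss (by rw [hcard, card_pair hne])).symm
  have hcard4 : ∀ p ∈ P, (Fpair p).card = 4 := by
    intro p hp
    obtain ⟨e, f, he, hf, hne, hone, rfl⟩ := hrep p hp
    rw [Fpair_pair, Fp_card huniform he hf hone]
  have hEq : ∀ p ∈ P, ∀ c ∈ Fpair p, ∃ e f, e ∈ E ∧ f ∈ E ∧ p = {e, f} ∧ c ∈ Fp e f := by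
    intro p hp c hc
    obtain ⟨e, f, he, hf, hne, hone, rfl⟩ := hrep p hp
    rw [Fpair_pair] at hc
    exact ⟨e, f, he, hf, rfl, hc⟩
  have hdisj : ∀ p ∈ P, ∀ q ∈ P, p ≠ q → Disjoint (Fpair p) (Fpair q) := by
    intro p hp q hq hpq
    rw [Finset.disjoint_left]
    intro c hcp hcq
    obtain ⟨e, f, he, hf, hpef, h1⟩ := hEq p hp c hcp
    obtain ⟨e', f', he', hf', hqef, h2⟩ := hEq q hq c hcq
    exact hpq (by rw [hpef, hqef]; exact Fp_key hlinear he hf he' hf' h1 h2)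
  have hsub : P.biUnion Fpair ⊆ C := by
    intro c hc
    rw [mem_biUnion] at hc
    obtain ⟨p, hp, hc⟩ := hc
    obtain ⟨e, f, he, hf, -, h1⟩ := hEq p hp c hc
    exact Fp_subset U hU he hf h1
  calc 4 * pairCount E = ∑ p ∈ P, (Fpair p).card := by
        rw [Finset.sum_congr rfl hcard4, sum_const, smul_eq_mul, mul_comm]
        rfl
    _ = (P.biUnion Fpair).card := (Finset.card_biUnion hdisj).symm
    _ ≤ C.card := card_le_card hsub
end

section
/- Let H be a linear 3-uniform hypergraph. Then the bow-tie graph B of H has maximum degree at most 8. -/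
open Finset

variable {V : Type*} [Fintype V] [DecidableEq V]

/-- The vertex set of the bow-tie graph: unordered pairs of hyperedges
intersecting in exactly one vertex. -/
def bowPairs (E : Finset (Finset V)) : Finset (Finset (Finset V)) :=
  (E.powersetCard 2).filter fun s => ∃ e ∈ s, ∃ f ∈ s, e ≠ f ∧ (e ∩ f).card = 1

/-- The adjacency relation of the bow-tie graph: `{e,f} ~ {f,g}` where `e, f, g` are
distinct hyperedges pairwise intersecting in exactly one vertex with empty common
intersection. -/
def IsBowAdj (E : Finset (Finset V)) (s t : Finset (Finset V)) : Prop :=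
  ∃ e f g, e ∈ E ∧ f ∈ E ∧ g ∈ E ∧ e ≠ f ∧ f ≠ g ∧ e ≠ g ∧
    (e ∩ f).card = 1 ∧ (f ∩ g).card = 1 ∧ (e ∩ g).card = 1 ∧ e ∩ f ∩ g = ∅ ∧
    s = {e, f} ∧ t = {f, g}

/-!
A neighbour of `{e, f}` in the bow-tie graph is `{h, g}` with `h ∈ {e, f}` and `g` a hyperedge
closing a triangle with `e` and `f`. Such a `g` meets `e` in a single point of `e \ f` and `f` in a
single point of `f \ e`, and by linearity these two points determine `g`. Hence there are at most
`2 * 2` choices of `g` and `2 * 2 * 2 = 8` neighbours.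
-/

section

omit [Fintype V]

def triangleCompletions (E : Finset (Finset V)) (e f : Finset V) : Finset (Finset V) :=
  E.filter fun g => g ≠ e ∧ g ≠ f ∧ (e ∩ g).card = 1 ∧ (f ∩ g).card = 1 ∧ e ∩ f ∩ g = ∅

theorem triangleCompletions_comm (E : Finset (Finset V)) (e f : Finset V) :
    triangleCompletions E e f = triangleCompletions E f e := by
  ext g
  simp only [triangleCompletions, mem_filter, inter_comm e f]
  tauto

theorem eq_of_mem_of_mem_of_ne {E : Finset (Finset V)}
    (hlinear : ∀ e ∈ E, ∀ f ∈ E, e ≠ f → (e ∩ f).card ≤ 1)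
    {g g' : Finset V} (hg : g ∈ E) (hg' : g' ∈ E) {y z : V} (hyz : y ≠ z)
    (hy : y ∈ g ∧ y ∈ g') (hz : z ∈ g ∧ z ∈ g') : g = g' := by
  by_contra hne
  exact hyz (card_le_one.mp (hlinear g hg g' hg' hne) y (mem_inter.mpr hy) z (mem_inter.mpr hz))

theorem card_triangleCompletions_le {E : Finset (Finset V)}
    (hlinear : ∀ e ∈ E, ∀ f ∈ E, e ≠ f → (e ∩ f).card ≤ 1) (e f : Finset V) :
    #(triangleCompletions E e f) ≤ #(e \ f) * #(f \ e) := by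
  have hmaps : ∀ g ∈ triangleCompletions E e f,
      (e ∩ g, f ∩ g) ∈ (e \ f).powersetCard 1 ×ˢ (f \ e).powersetCard 1 := by
    intro g hg
    obtain ⟨-, -, -, he, hf, hefg⟩ := mem_filter.mp hg
    refine mem_product.mpr ⟨mem_powersetCard.mpr ⟨?_, he⟩, mem_powersetCard.mpr ⟨?_, hf⟩⟩
    all_goals
      intro x hx
      have : x ∉ e ∩ f ∩ g := hefg ▸ notMem_empty x
      simp only [mem_inter] at hx this
      simp only [mem_sdiff]
      tauto
  have hinj : Set.InjOn (fun g => (e ∩ g, f ∩ g)) (triangleCompletions E e f) := by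
    intro g hg g' hg' hgg'
    obtain ⟨hgE, -, -, he, hf, hefg⟩ := mem_filter.mp hg
    obtain ⟨hg'E, -⟩ := mem_filter.mp hg'
    obtain ⟨he', hf'⟩ := Prod.mk.inj hgg'
    obtain ⟨y, hy⟩ := card_eq_one.mp he
    obtain ⟨z, hz⟩ := card_eq_one.mp hf
    have hyeg : y ∈ e ∩ g := hy ▸ mem_singleton_self y
    have hzfg : z ∈ f ∩ g := hz ▸ mem_singleton_self z
    have hyeg' : y ∈ e ∩ g' := he' ▸ hyeg
    have hzfg' : z ∈ f ∩ g' := hf' ▸ hzfg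
    have hyz : y ≠ z := by
      rintro rfl
      have : y ∈ e ∩ f ∩ g := by grind
      simp [hefg] at this
    exact eq_of_mem_of_mem_of_ne hlinear hgE hg'E hyz
      ⟨(mem_inter.mp hyeg).2, (mem_inter.mp hyeg').2⟩ ⟨(mem_inter.mp hzfg).2, (mem_inter.mp hzfg').2⟩
  calc #(triangleCompletions E e f)
      ≤ #((e \ f).powersetCard 1 ×ˢ (f \ e).powersetCard 1) := card_le_card_of_injOn _ hmaps hinj
    _ = #(e \ f) * #(f \ e) := by simp only [card_product, card_powersetCard, Nat.choose_one_right]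

theorem exists_eq_pair_of_mem_bowPairs {E : Finset (Finset V)} {s : Finset (Finset V)}
    (hs : s ∈ bowPairs E) : ∃ e ∈ E, ∃ f ∈ E, e ≠ f ∧ (e ∩ f).card = 1 ∧ s = {e, f} := by
  obtain ⟨hsE, e, he, f, hf, hef, hcard⟩ := mem_filter.mp hs
  obtain ⟨hsub, hs2⟩ := mem_powersetCard.mp hsE
  refine ⟨e, hsub he, f, hsub hf, hef, hcard, ?_⟩
  refine (eq_of_subset_of_card_le (insert_subset he (singleton_subset_iff.mpr hf)) ?_).symm
  rw [hs2, card_pair hef]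

theorem exists_eq_pair_of_isBowAdj {E : Finset (Finset V)} {e f : Finset V} {t : Finset (Finset V)}
    (h : IsBowAdj E {e, f} t) :
    ∃ h ∈ ({e, f} : Finset (Finset V)), ∃ g ∈ triangleCompletions E e f, t = {h, g} := by
  obtain ⟨e₁, f₁, g, -, -, hg, -, hfg, heg, -, hfg1, heg1, hefg, hs, rfl⟩ := h
  have hg₁ : g ∈ triangleCompletions E e₁ f₁ :=
    mem_filter.mpr ⟨hg, heg.symm, hfg.symm, heg1, hfg1, hefg⟩
  rw [← coe_inj, coe_pair, coe_pair, Set.pair_eq_pair_iff] at hs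
  rcases hs with ⟨rfl, rfl⟩ | ⟨rfl, rfl⟩
  · exact ⟨f, by simp, g, hg₁, rfl⟩
  · exact ⟨e, by simp, g, triangleCompletions_comm E f e ▸ hg₁, rfl⟩

end

theorem stmt_12 (E : Finset (Finset V))
    (huniform : ∀ e ∈ E, e.card = 3)
    (hlinear : ∀ e ∈ E, ∀ f ∈ E, e ≠ f → (e ∩ f).card ≤ 1)
    (B : SimpleGraph ↥(bowPairs E)) [DecidableRel B.Adj]
    (hB : ∀ s t : ↥(bowPairs E), B.Adj s t ↔ IsBowAdj E ↑s ↑t) :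
    ∀ s : ↥(bowPairs E), B.degree s ≤ 8 := by
  intro s
  obtain ⟨e, he, f, hf, -, hef, hs⟩ := exists_eq_pair_of_mem_bowPairs s.2
  have hsdiff : ∀ a ∈ E, ∀ b ∈ E, (a ∩ b).card = 1 → #(a \ b) = 2 := fun a ha b _ hab => by
    have := card_sdiff_add_card_inter a b
    rw [huniform a ha] at this
    omega
  have hneighbors : (B.neighborFinset s).map (Function.Embedding.subtype _) ⊆
      ((({e, f} : Finset (Finset V)) ×ˢ triangleCompletions E e f).image fun p => {p.1, p.2}) := by
    intro t ht
    obtain ⟨t, hadj, rfl⟩ := mem_map.mp ht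
    rw [SimpleGraph.mem_neighborFinset, hB, hs] at hadj
    obtain ⟨h, hh, g, hg, hteq⟩ := exists_eq_pair_of_isBowAdj hadj
    exact mem_image.mpr ⟨(h, g), mem_product.mpr ⟨hh, hg⟩, hteq.symm⟩
  calc B.degree s = #((B.neighborFinset s).map (Function.Embedding.subtype _)) := by
        rw [card_map, SimpleGraph.card_neighborFinset_eq_degree]
    _ ≤ #(({e, f} : Finset (Finset V)) ×ˢ triangleCompletions E e f) :=
        (card_le_card hneighbors).trans card_image_le
    _ ≤ 2 * (#(e \ f) * #(f \ e)) := by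
        rw [card_product]
        exact Nat.mul_le_mul card_le_two (card_triangleCompletions_le hlinear e f)
    _ = 8 := by rw [hsdiff e he f hf hef, hsdiff f hf e he (inter_comm e f ▸ hef)]
end

section
/- Let H be a linear 3-uniform hypergraph with underlying graph U and bow-tie graph B. Then e(B) = 3·κ_△(U) − 3·e(H). -/
open Finset

variable {V : Type*} [Fintype V] [DecidableEq V]

/-- The number of triangles in `G`. -/
def triCount (G : SimpleGraph V) [DecidableRel G.Adj] : ℕ :=
  (G.cliqueFinset 3).card


set_option linter.unusedSectionVars false
set_option linter.unusedVariables false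
set_option maxHeartbeats 1000000

def Trip (E : Finset (Finset V)) : Finset (Finset (Finset V)) :=
  (E.powersetCard 3).filter fun s => ∃ e f g : Finset V, s = {e, f, g} ∧
    (e ∩ f).card = 1 ∧ (f ∩ g).card = 1 ∧ (e ∩ g).card = 1 ∧ e ∩ f ∩ g = ∅

lemma lin_eq {E : Finset (Finset V)}
    (hlinear : ∀ e ∈ E, ∀ f ∈ E, e ≠ f → (e ∩ f).card ≤ 1)
    {h k : Finset V} (hh : h ∈ E) (hk : k ∈ E) {p q : V} (hpq : p ≠ q)
    (hph : p ∈ h) (hqh : q ∈ h) (hpk : p ∈ k) (hqk : q ∈ k) : h = k := by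
  by_contra hne
  have h1 := hlinear h hh k hk hne
  have h2 : 1 < (h ∩ k).card :=
    one_lt_card.2 ⟨p, mem_inter.2 ⟨hph, hpk⟩, q, mem_inter.2 ⟨hqh, hqk⟩, hpq⟩
  omega

lemma inter_eq_singleton {E : Finset (Finset V)}
    (hlinear : ∀ e ∈ E, ∀ f ∈ E, e ≠ f → (e ∩ f).card ≤ 1)
    {h k : Finset V} (hh : h ∈ E) (hk : k ∈ E) (hne : h ≠ k) {p : V}
    (hp : p ∈ h) (hpk : p ∈ k) : h ∩ k = {p} := by
  apply Finset.Subset.antisymm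
  · intro q hq
    rw [mem_singleton]
    by_contra hqp
    exact hne (lin_eq hlinear hh hk hqp (mem_inter.1 hq).1 hp (mem_inter.1 hq).2 hpk)
  · simp [hp, hpk]

lemma card3_distinct {α : Type*} [DecidableEq α] {a b c : α}
    (h : ({a, b, c} : Finset α).card = 3) : a ≠ b ∧ a ≠ c ∧ b ≠ c := by
  refine ⟨?_, ?_, ?_⟩ <;> rintro rfl
  · rw [show ({a, a, c} : Finset α) = {a, c} by simp] at h
    have := Finset.card_insert_le a ({c} : Finset α)
    simp at this; omega
  · rw [show ({a, b, a} : Finset α) = {a, b} by ext x; simp; tauto] at h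
    have := Finset.card_insert_le a ({b} : Finset α)
    simp at this; omega
  · rw [show ({a, b, b} : Finset α) = {a, b} by simp] at h
    have := Finset.card_insert_le a ({b} : Finset α)
    simp at this; omega

set_option maxHeartbeats 1000000

-- a hyperedge covering two vertices of an uncovered triangle meets it in exactly 2 vertices
lemma cover2 {E : Finset (Finset V)} (hlinear : ∀ e ∈ E, ∀ f ∈ E, e ≠ f → (e ∩ f).card ≤ 1) {t : Finset V} (htc : t.card = 3) (hnc : ¬∃ h ∈ E, t ⊆ h)
    {h : Finset V} (hh : h ∈ E) {p q : V} (hpq : p ≠ q) (hpt : p ∈ t) (hqt : q ∈ t)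
    (hph : p ∈ h) (hqh : q ∈ h) : (h ∩ t).card = 2 := by
  have h2 : 1 < (h ∩ t).card :=
    one_lt_card.2 ⟨p, mem_inter.2 ⟨hph, hpt⟩, q, mem_inter.2 ⟨hqh, hqt⟩, hpq⟩
  have h3 : (h ∩ t).card ≤ 3 := htc ▸ card_le_card inter_subset_right
  have h4 : (h ∩ t).card ≠ 3 := by
    intro hc
    refine hnc ⟨h, hh, ?_⟩
    have : h ∩ t = t := eq_of_subset_of_card_le inter_subset_right (by omega)
    intro v hv
    exact (mem_inter.1 (this.symm ▸ hv)).1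
  omega

lemma memchar {E : Finset (Finset V)} (hlinear : ∀ e ∈ E, ∀ f ∈ E, e ≠ f → (e ∩ f).card ≤ 1) {t : Finset V} (htc : t.card = 3) (hcl : (∀ u ∈ t, ∀ v ∈ t, u ≠ v → ∃ e ∈ E, u ∈ e ∧ v ∈ e))
    (hnc : ¬∃ h ∈ E, t ⊆ h) (v : V) :
    v ∈ t ↔ ∃ h₁ ∈ E.filter (fun h => (h ∩ t).card = 2), ∃ h₂ ∈ E.filter (fun h => (h ∩ t).card = 2),
      h₁ ≠ h₂ ∧ v ∈ h₁ ∧ v ∈ h₂ := by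
  constructor
  · intro hv
    have hec : (t.erase v).card = 2 := by rw [card_erase_of_mem hv, htc]
    obtain ⟨u, w, huw, he⟩ := card_eq_two.mp hec
    have hut : u ∈ t := mem_of_mem_erase (he ▸ mem_insert_self u {w})
    have hwt : w ∈ t := mem_of_mem_erase (he ▸ mem_insert_of_mem (mem_singleton_self w))
    have huv : u ≠ v := ne_of_mem_erase (he ▸ mem_insert_self u {w})
    have hwv : w ≠ v := ne_of_mem_erase (he ▸ mem_insert_of_mem (mem_singleton_self w))
    obtain ⟨h₁, hh₁, hvh₁, huh₁⟩ := hcl v hv u hut (Ne.symm huv)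
    obtain ⟨h₂, hh₂, hvh₂, hwh₂⟩ := hcl v hv w hwt (Ne.symm hwv)
    have hne : h₁ ≠ h₂ := by
      rintro rfl
      refine hnc ⟨h₁, hh₁, ?_⟩
      intro x hx
      rcases eq_or_ne x v with rfl | hxv
      · exact hvh₁
      · have : x ∈ t.erase v := mem_erase.2 ⟨hxv, hx⟩
        rw [he] at this
        rcases mem_insert.1 this with rfl | hxw
        · exact huh₁
        · rw [mem_singleton.1 hxw]; exact hwh₂
    exact ⟨h₁, mem_filter.2 ⟨hh₁, cover2 hlinear htc hnc hh₁ (Ne.symm huv) hv hut hvh₁ huh₁⟩,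
      h₂, mem_filter.2 ⟨hh₂, cover2 hlinear htc hnc hh₂ (Ne.symm hwv) hv hwt hvh₂ hwh₂⟩,
      hne, hvh₁, hvh₂⟩
  · rintro ⟨h₁, hm₁, h₂, hm₂, hne, hv₁, hv₂⟩
    rw [mem_filter] at hm₁ hm₂
    have hle := hlinear h₁ hm₁.1 h₂ hm₂.1 hne
    have hie := Finset.card_union_add_card_inter (h₁ ∩ t) (h₂ ∩ t)
    have hu : ((h₁ ∩ t) ∪ (h₂ ∩ t)).card ≤ 3 := by
      rw [← htc]
      exact card_le_card (union_subset inter_subset_right inter_subset_right)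
    have hsub : (h₁ ∩ t) ∩ (h₂ ∩ t) ⊆ h₁ ∩ h₂ := by
      intro x hx
      simp only [mem_inter] at hx ⊢
      exact ⟨hx.1.1, hx.2.1⟩
    have hpos : 0 < ((h₁ ∩ t) ∩ (h₂ ∩ t)).card := by omega
    obtain ⟨w, hw⟩ := card_pos.1 hpos
    have hw12 : w ∈ h₁ ∩ h₂ := hsub hw
    have hv12 : v ∈ h₁ ∩ h₂ := mem_inter.2 ⟨hv₁, hv₂⟩
    have : w = v := by
      by_contra hwv
      have : 1 < (h₁ ∩ h₂).card := one_lt_card.2 ⟨w, hw12, v, hv12, hwv⟩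
      omega
    subst this
    exact (mem_inter.1 (mem_inter.1 hw).1).2

lemma F_eq {E : Finset (Finset V)} (hlinear : ∀ e ∈ E, ∀ f ∈ E, e ≠ f → (e ∩ f).card ≤ 1) {t : Finset V} {x y z : V} (hxy : x ≠ y) (hxz : x ≠ z) (hyz : y ≠ z)
    (ht : t = {x, y, z}) {e f g : Finset V} (he : e ∈ E) (hf : f ∈ E) (hg : g ∈ E)
    (hxe : x ∈ e) (hye : y ∈ e) (hyf : y ∈ f) (hzf : z ∈ f) (hxg : x ∈ g) (hzg : z ∈ g)
    (hnc : ¬∃ h ∈ E, t ⊆ h) :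
    E.filter (fun h => (h ∩ t).card = 2) = {e, f, g} := by
  have htc : t.card = 3 := by
    rw [ht, card_insert_of_notMem (by simp [hxy, hxz]),
      card_insert_of_notMem (by simp [hyz]), card_singleton]
  have hxt : x ∈ t := by simp [ht]
  have hyt : y ∈ t := by simp [ht]
  have hzt : z ∈ t := by simp [ht]
  have hsubt : ∀ h, x ∈ h → y ∈ h → z ∈ h → t ⊆ h := by
    intro h h1 h2 h3 v hv
    rw [ht] at hv
    rcases mem_insert.1 hv with rfl | hv
    · exact h1
    rcases mem_insert.1 hv with rfl | hv
    · exact h2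
    · rw [mem_singleton.1 hv]; exact h3
  ext h
  simp only [mem_filter, mem_insert, mem_singleton]
  constructor
  · rintro ⟨hh, hc⟩
    obtain ⟨u, v, huv, hEq⟩ := card_eq_two.mp hc
    have hu : u ∈ h ∩ t := hEq ▸ mem_insert_self u {v}
    have hv : v ∈ h ∩ t := hEq ▸ mem_insert_of_mem (mem_singleton_self v)
    have hut : u ∈ t := (mem_inter.1 hu).2
    have hvt : v ∈ t := (mem_inter.1 hv).2
    have huh : u ∈ h := (mem_inter.1 hu).1
    have hvh : v ∈ h := (mem_inter.1 hv).1
    rw [ht] at hut hvt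
    simp only [mem_insert, mem_singleton] at hut hvt
    rcases hut with rfl | rfl | rfl <;> rcases hvt with rfl | rfl | rfl
    · exact absurd rfl huv
    · exact Or.inl (lin_eq hlinear hh he huv huh hvh hxe hye)
    · exact Or.inr (Or.inr (lin_eq hlinear hh hg huv huh hvh hxg hzg))
    · exact Or.inl (lin_eq hlinear hh he huv huh hvh hye hxe)
    · exact absurd rfl huv
    · exact Or.inr (Or.inl (lin_eq hlinear hh hf huv huh hvh hyf hzf))
    · exact Or.inr (Or.inr (lin_eq hlinear hh hg huv huh hvh hzg hxg))
    · exact Or.inr (Or.inl (lin_eq hlinear hh hf huv huh hvh hzf hyf))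
    · exact absurd rfl huv
  · rintro (rfl | rfl | rfl)
    · exact ⟨he, cover2 hlinear htc hnc he hxy hxt hyt hxe hye⟩
    · exact ⟨hf, cover2 hlinear htc hnc hf hyz hyt hzt hyf hzf⟩
    · exact ⟨hg, cover2 hlinear htc hnc hg hxz hxt hzt hxg hzg⟩

lemma tri_eq (E : Finset (Finset V))
    (huniform : ∀ e ∈ E, e.card = 3)
    (hlinear : ∀ e ∈ E, ∀ f ∈ E, e ≠ f → (e ∩ f).card ≤ 1)
    (U : SimpleGraph V) [DecidableRel U.Adj]
    (hU : ∀ u v : V, U.Adj u v ↔ u ≠ v ∧ ∃ e ∈ E, u ∈ e ∧ v ∈ e) :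
    triCount U = E.card + (Trip E).card := by
  classical
  have hcl : ∀ t ∈ U.cliqueFinset 3, ∀ u ∈ t, ∀ v ∈ t, u ≠ v → ∃ e ∈ E, u ∈ e ∧ v ∈ e := by
    intro t ht u hu v hv huv
    have := (SimpleGraph.mem_cliqueFinset_iff.1 ht).1 (by exact_mod_cast hu) (by exact_mod_cast hv) huv
    exact ((hU u v).1 this).2
  have htc : ∀ t ∈ U.cliqueFinset 3, t.card = 3 := fun t ht =>
    (SimpleGraph.mem_cliqueFinset_iff.1 ht).2
  have hsplit := Finset.card_filter_add_card_filter_not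
    (s := U.cliqueFinset 3) (p := fun t => ∃ h ∈ E, t ⊆ h)
  have hA : ((U.cliqueFinset 3).filter fun t => ∃ h ∈ E, t ⊆ h).card = E.card := by
    symm
    apply Finset.card_bij (fun h _ => h)
    · intro h hh
      refine mem_filter.2 ⟨SimpleGraph.mem_cliqueFinset_iff.2 ⟨?_, huniform h hh⟩, h, hh, Finset.Subset.refl h⟩
      intro u hu v hv huv
      exact (hU u v).2 ⟨huv, h, hh, hu, hv⟩
    · intro a _ b _ hab
      exact hab
    · intro t ht
      obtain ⟨htcl, h, hh, hsub⟩ := mem_filter.1 ht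
      have : t = h := eq_of_subset_of_card_le hsub
        (by rw [huniform h hh, (SimpleGraph.mem_cliqueFinset_iff.1 htcl).2])
      exact ⟨h, hh, this.symm⟩
  have hB : ((U.cliqueFinset 3).filter fun t => ¬∃ h ∈ E, t ⊆ h).card = (Trip E).card := by
    apply Finset.card_bij (fun t _ => E.filter fun h => (h ∩ t).card = 2)
    · -- maps to Trip
      intro t ht
      obtain ⟨htcl, hnc⟩ := mem_filter.1 ht
      obtain ⟨x, y, z, hxy, hxz, hyz, hteq⟩ := card_eq_three.mp (htc t htcl)
      have hxt : x ∈ t := by simp [hteq]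
      have hyt : y ∈ t := by simp [hteq]
      have hzt : z ∈ t := by simp [hteq]
      obtain ⟨e, he, hxe, hye⟩ := hcl t htcl x hxt y hyt hxy
      obtain ⟨f, hf, hyf, hzf⟩ := hcl t htcl y hyt z hzt hyz
      obtain ⟨g, hg, hxg, hzg⟩ := hcl t htcl x hxt z hzt hxz
      have hFeq := F_eq hlinear hxy hxz hyz hteq he hf hg hxe hye hyf hzf hxg hzg hnc
      have hsubt : ∀ h, x ∈ h → y ∈ h → z ∈ h → t ⊆ h := by
        intro h h1 h2 h3 v hv
        rw [hteq] at hv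
        rcases mem_insert.1 hv with rfl | hv
        · exact h1
        rcases mem_insert.1 hv with rfl | hv
        · exact h2
        · rw [mem_singleton.1 hv]; exact h3
      have hef : e ≠ f := by rintro rfl; exact hnc ⟨e, he, hsubt e hxe hye hzf⟩
      have heg : e ≠ g := by rintro rfl; exact hnc ⟨e, he, hsubt e hxe hye hzg⟩
      have hfg : f ≠ g := by rintro rfl; exact hnc ⟨f, hf, hsubt f hxg hyf hzf⟩
      have hief : e ∩ f = {y} := inter_eq_singleton hlinear he hf hef hye hyf
      have hifg : f ∩ g = {z} := inter_eq_singleton hlinear hf hg hfg hzf hzg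
      have hieg : e ∩ g = {x} := inter_eq_singleton hlinear he hg heg hxe hxg
      have hyg : y ∉ g := fun hyg => hnc ⟨g, hg, hsubt g hxg hyg hzg⟩
      rw [hFeq]
      refine mem_filter.2 ⟨mem_powersetCard.2 ⟨?_, ?_⟩, e, f, g, rfl, ?_, ?_, ?_, ?_⟩
      · intro h hh
        rcases mem_insert.1 hh with rfl | hh
        · exact he
        rcases mem_insert.1 hh with rfl | hh
        · exact hf
        · rw [mem_singleton.1 hh]; exact hg
      · rw [card_insert_of_notMem (by simp [hef, heg]),
          card_insert_of_notMem (by simp [hfg]), card_singleton]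
      · rw [hief]; rfl
      · rw [hifg]; rfl
      · rw [hieg]; rfl
      · rw [hief, singleton_inter_of_notMem hyg]
    · -- injective
      intro t₁ ht₁ t₂ ht₂ hF
      obtain ⟨htcl₁, hnc₁⟩ := mem_filter.1 ht₁
      obtain ⟨htcl₂, hnc₂⟩ := mem_filter.1 ht₂
      ext v
      rw [memchar hlinear (htc t₁ htcl₁) (hcl t₁ htcl₁) hnc₁ v,
        memchar hlinear (htc t₂ htcl₂) (hcl t₂ htcl₂) hnc₂ v, hF]
    · -- surjective
      intro s hs
      obtain ⟨hpow, e, f, g, rfl, h1, h2, h3, h0⟩ := mem_filter.1 hs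
      obtain ⟨hsubE, hcard3⟩ := mem_powersetCard.1 hpow
      obtain ⟨hef, heg, hfg⟩ := card3_distinct hcard3
      have he : e ∈ E := hsubE (by simp)
      have hf : f ∈ E := hsubE (by simp)
      have hg : g ∈ E := hsubE (by simp)
      obtain ⟨a, ha⟩ := card_eq_one.mp h1
      obtain ⟨b, hb⟩ := card_eq_one.mp h2
      obtain ⟨c, hc⟩ := card_eq_one.mp h3
      have hae : a ∈ e := (mem_inter.1 (ha ▸ mem_singleton_self a)).1
      have haf : a ∈ f := (mem_inter.1 (ha ▸ mem_singleton_self a)).2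
      have hbf : b ∈ f := (mem_inter.1 (hb ▸ mem_singleton_self b)).1
      have hbg : b ∈ g := (mem_inter.1 (hb ▸ mem_singleton_self b)).2
      have hce : c ∈ e := (mem_inter.1 (hc ▸ mem_singleton_self c)).1
      have hcg : c ∈ g := (mem_inter.1 (hc ▸ mem_singleton_self c)).2
      have htriple : ∀ v, v ∈ e → v ∈ f → v ∈ g → False := by
        intro v hv1 hv2 hv3
        have : v ∈ e ∩ f ∩ g := by simp [hv1, hv2, hv3]
        rw [h0] at this
        exact notMem_empty v this
      have hab : a ≠ b := by rintro rfl; exact htriple a hae haf hbg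
      have hac : a ≠ c := by rintro rfl; exact htriple a hae haf hcg
      have hbc : b ≠ c := by rintro rfl; exact htriple b hce hbf hbg
      have hnc : ¬∃ h ∈ E, ({a, c, b} : Finset V) ⊆ h := by
        rintro ⟨h, hh, hsub⟩
        have hah : a ∈ h := hsub (by simp)
        have hch : c ∈ h := hsub (by simp)
        have hbh : b ∈ h := hsub (by simp)
        have : h = e := lin_eq hlinear hh he hac hah hch hae hce
        subst this
        exact htriple b hbh hbf hbg
      refine ⟨{a, c, b}, ?_, ?_⟩
      · refine mem_filter.2 ⟨SimpleGraph.mem_cliqueFinset_iff.2 ⟨?_, ?_⟩, hnc⟩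
        · intro u hu v hv huv
          simp only [coe_insert, Set.mem_insert_iff, coe_singleton, Set.mem_singleton_iff] at hu hv
          have key : ∀ p q : V, p ≠ q → (p = a ∨ p = c ∨ p = b) → (q = a ∨ q = c ∨ q = b) →
              ∃ h ∈ E, p ∈ h ∧ q ∈ h := by
            rintro p q hpq (rfl | rfl | rfl) (rfl | rfl | rfl)
            · exact absurd rfl hpq
            · exact ⟨e, he, hae, hce⟩
            · exact ⟨f, hf, haf, hbf⟩
            · exact ⟨e, he, hce, hae⟩
            · exact absurd rfl hpq
            · exact ⟨g, hg, hcg, hbg⟩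
            · exact ⟨f, hf, hbf, haf⟩
            · exact ⟨g, hg, hbg, hcg⟩
            · exact absurd rfl hpq
          exact (hU u v).2 ⟨huv, key u v huv hu hv⟩
        · rw [card_insert_of_notMem (by simp [hac, hab]),
            card_insert_of_notMem (by simp [hbc.symm ]), card_singleton]
      · have := F_eq hlinear hac hab hbc.symm rfl he hg hf hae hce hcg hbg haf hbf hnc
        rw [this]
        ext h; simp; tauto
  rw [triCount, ← hsplit, hA, hB]

def bowKey : Sym2 (Finset (Finset V)) → Finset (Finset V) × Finset V :=
  Sym2.lift ⟨fun s t => (s ∪ t, (s ∩ t).sup id), fun s t => by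
    simp [Finset.union_comm, Finset.inter_comm]⟩

lemma bowKey_eval {e f g : Finset V} (hef : e ≠ f) (heg : e ≠ g) :
    bowKey (s(({e, f} : Finset (Finset V)), ({f, g} : Finset (Finset V)))) = ({e, f, g}, f) := by
  have h1 : ({e, f} : Finset (Finset V)) ∪ {f, g} = {e, f, g} := by
    ext x; simp only [mem_union, mem_insert, mem_singleton]; tauto
  have h2 : ({e, f} : Finset (Finset V)) ∩ {f, g} = {f} := by
    ext x
    simp only [mem_inter, mem_insert, mem_singleton]
    constructor
    · rintro ⟨ha | ha, hb | hb⟩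
      · exact absurd (ha.symm.trans hb) hef
      · exact absurd (ha.symm.trans hb) heg
      · exact ha
      · exact ha
    · rintro rfl; exact ⟨Or.inr rfl, Or.inl rfl⟩
  simp only [bowKey, Sym2.lift_mk, h1, h2, Finset.sup_singleton, id]

lemma mem_bowPairs {E : Finset (Finset V)} {e f : Finset V} (he : e ∈ E) (hf : f ∈ E)
    (hef : e ≠ f) (h1 : (e ∩ f).card = 1) : ({e, f} : Finset (Finset V)) ∈ bowPairs E :=
  mem_filter.2 ⟨mem_powersetCard.2 ⟨by
      intro x hx
      rcases mem_insert.1 hx with rfl | hx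
      · exact he
      · rw [mem_singleton.1 hx]; exact hf, card_pair hef⟩,
    e, by simp, f, by simp, hef, h1⟩

lemma edge_rep {E : Finset (Finset V)} {B : SimpleGraph ↥(bowPairs E)} [DecidableRel B.Adj]
    (hB : ∀ s t : ↥(bowPairs E), B.Adj s t ↔ IsBowAdj E ↑s ↑t)
    {z : Sym2 ↥(bowPairs E)} (hz : z ∈ B.edgeFinset) :
    ∃ (a b : ↥(bowPairs E)) (e f g : Finset V), z = s(a, b) ∧
      (↑a : Finset (Finset V)) = {e, f} ∧ (↑b : Finset (Finset V)) = {f, g} ∧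
      e ∈ E ∧ f ∈ E ∧ g ∈ E ∧ e ≠ f ∧ f ≠ g ∧ e ≠ g ∧
      (e ∩ f).card = 1 ∧ (f ∩ g).card = 1 ∧ (e ∩ g).card = 1 ∧ e ∩ f ∩ g = ∅ := by
  rw [SimpleGraph.mem_edgeFinset] at hz
  induction z using Sym2.ind with
  | _ a b =>
    rw [SimpleGraph.mem_edgeSet, hB] at hz
    obtain ⟨e, f, g, he, hf, hg, hef, hfg, heg, h1, h2, h3, h0, hsa, hsb⟩ := hz
    exact ⟨a, b, e, f, g, rfl, hsa, hsb, he, hf, hg, hef, hfg, heg, h1, h2, h3, h0⟩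

lemma edge_card (E : Finset (Finset V))
    (B : SimpleGraph ↥(bowPairs E)) [DecidableRel B.Adj]
    (hB : ∀ s t : ↥(bowPairs E), B.Adj s t ↔ IsBowAdj E ↑s ↑t) :
    B.edgeFinset.card = 3 * (Trip E).card := by
  classical
  have hT : ((Trip E).sigma fun s => s).card = 3 * (Trip E).card := by
    have h3 : ∀ s ∈ Trip E, s.card = 3 := fun s hs =>
      (mem_powersetCard.1 (mem_filter.1 hs).1).2
    rw [Finset.card_sigma, Finset.sum_congr rfl h3, Finset.sum_const, smul_eq_mul, mul_comm]
  rw [← hT]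
  apply Finset.card_bij (fun z (_ : z ∈ B.edgeFinset) =>
    (⟨(bowKey (z.map Subtype.val)).1, (bowKey (z.map Subtype.val)).2⟩ :
      (_ : Finset (Finset V)) × Finset V))
  · intro z hz
    obtain ⟨a, b, e, f, g, rfl, hsa, hsb, he, hf, hg, hef, hfg, heg, h1, h2, h3, h0⟩ :=
      edge_rep hB hz
    rw [Sym2.map_pair_eq, hsa, hsb, bowKey_eval hef heg]
    refine Finset.mem_sigma.2 ⟨?_, by simp⟩
    refine mem_filter.2 ⟨mem_powersetCard.2 ⟨?_, ?_⟩, e, f, g, rfl, h1, h2, h3, h0⟩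
    · intro x hx
      rcases mem_insert.1 hx with rfl | hx
      · exact he
      rcases mem_insert.1 hx with rfl | hx
      · exact hf
      · rw [mem_singleton.1 hx]; exact hg
    · rw [card_insert_of_notMem (by simp [hef, heg]),
        card_insert_of_notMem (by simp [hfg]), card_singleton]
  · intro z₁ hz₁ z₂ hz₂ hkey
    obtain ⟨a₁, b₁, e₁, f₁, g₁, rfl, hsa₁, hsb₁, he₁, hf₁, hg₁, hef₁, hfg₁, heg₁, _, _, _, _⟩ :=
      edge_rep hB hz₁
    obtain ⟨a₂, b₂, e₂, f₂, g₂, rfl, hsa₂, hsb₂, he₂, hf₂, hg₂, hef₂, hfg₂, heg₂, _, _, _, _⟩ :=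
      edge_rep hB hz₂
    rw [Sym2.map_pair_eq, Sym2.map_pair_eq, hsa₁, hsb₁, hsa₂, hsb₂,
      bowKey_eval hef₁ heg₁, bowKey_eval hef₂ heg₂] at hkey
    simp only [Sigma.mk.inj_iff, heq_eq_eq] at hkey
    obtain ⟨hs, hfeq⟩ := hkey
    subst hfeq
    have he2m : e₂ ∈ ({e₁, f₁, g₁} : Finset (Finset V)) := by rw [hs]; simp
    have hg2m : g₂ ∈ ({e₁, f₁, g₁} : Finset (Finset V)) := by rw [hs]; simp
    simp only [mem_insert, mem_singleton] at he2m hg2m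
    rcases he2m with h1e | h1e | h1e
    · rcases hg2m with h2g | h2g | h2g
      · exact absurd (h1e.trans h2g.symm) heg₂
      · exact absurd h2g hfg₂.symm
      · have ha : a₁ = a₂ := Subtype.ext (by rw [hsa₁, hsa₂, h1e])
        have hb : b₁ = b₂ := Subtype.ext (by rw [hsb₁, hsb₂, h2g])
        rw [ha, hb]
    · exact absurd h1e hef₂
    · rcases hg2m with h2g | h2g | h2g
      · have ha : a₁ = b₂ := Subtype.ext (by rw [hsa₁, hsb₂, h2g, pair_comm])
        have hb : b₁ = a₂ := Subtype.ext (by rw [hsb₁, hsa₂, h1e, pair_comm])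
        rw [ha, hb, Sym2.eq_swap]
      · exact absurd h2g hfg₂.symm
      · exact absurd (h1e.trans h2g.symm) heg₂
  · rintro ⟨s, x⟩ hsx
    obtain ⟨hs, hx⟩ := Finset.mem_sigma.1 hsx
    obtain ⟨hpow, e, f, g, rfl, h1, h2, h3, h0⟩ := mem_filter.1 hs
    obtain ⟨hsubE, hcard3⟩ := mem_powersetCard.1 hpow
    obtain ⟨hef, heg, hfg⟩ := card3_distinct hcard3
    have he : e ∈ E := hsubE (by simp)
    have hf : f ∈ E := hsubE (by simp)
    have hg : g ∈ E := hsubE (by simp)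
    simp only [mem_insert, mem_singleton] at hx
    rcases hx with rfl | rfl | rfl
    · -- middle x = e : use witnesses f, e, g
      have hpa := mem_bowPairs hf he hef.symm (by rw [inter_comm]; exact h1)
      have hpb := mem_bowPairs he hg heg h3
      refine ⟨s(⟨{f, x}, hpa⟩, ⟨{x, g}, hpb⟩), ?_, ?_⟩
      · rw [SimpleGraph.mem_edgeFinset, SimpleGraph.mem_edgeSet, hB]
        exact ⟨f, x, g, hf, he, hg, hef.symm, heg, hfg,
          by rw [inter_comm]; exact h1, h3, h2, by rw [inter_comm f x]; exact h0, rfl, rfl⟩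
      · have hm : Sym2.map Subtype.val s((⟨{f, x}, hpa⟩ : ↥(bowPairs E)), ⟨{x, g}, hpb⟩) =
            s(({f, x} : Finset (Finset V)), ({x, g} : Finset (Finset V))) := Sym2.map_pair_eq _ _ _
        rw [hm, bowKey_eval hef.symm hfg,
          show ({f, x, g} : Finset (Finset V)) = {x, f, g} by ext y; simp; tauto]
    · -- middle x = f
      have hpa := mem_bowPairs he hf hef h1
      have hpb := mem_bowPairs hf hg hfg h2
      refine ⟨s(⟨{e, x}, hpa⟩, ⟨{x, g}, hpb⟩), ?_, ?_⟩
      · rw [SimpleGraph.mem_edgeFinset, SimpleGraph.mem_edgeSet, hB]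
        exact ⟨e, x, g, he, hf, hg, hef, hfg, heg, h1, h2, h3, h0, rfl, rfl⟩
      · have hm : Sym2.map Subtype.val s((⟨{e, x}, hpa⟩ : ↥(bowPairs E)), ⟨{x, g}, hpb⟩) =
            s(({e, x} : Finset (Finset V)), ({x, g} : Finset (Finset V))) := Sym2.map_pair_eq _ _ _
        rw [hm, bowKey_eval hef heg]
    · -- middle x = g : use witnesses e, g, f
      have hpa := mem_bowPairs he hg heg h3
      have hpb := mem_bowPairs hg hf hfg.symm (by rw [inter_comm]; exact h2)
      refine ⟨s(⟨{e, x}, hpa⟩, ⟨{x, f}, hpb⟩), ?_, ?_⟩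
      · rw [SimpleGraph.mem_edgeFinset, SimpleGraph.mem_edgeSet, hB]
        exact ⟨e, x, f, he, hg, hf, heg, hfg.symm, hef,
          h3, by rw [inter_comm]; exact h2, h1, by rw [inter_right_comm]; exact h0, rfl, rfl⟩
      · have hm : Sym2.map Subtype.val s((⟨{e, x}, hpa⟩ : ↥(bowPairs E)), ⟨{x, f}, hpb⟩) =
            s(({e, x} : Finset (Finset V)), ({x, f} : Finset (Finset V))) := Sym2.map_pair_eq _ _ _
        rw [hm, bowKey_eval heg hef,
          show ({e, x, f} : Finset (Finset V)) = {e, f, x} by ext y; simp; tauto]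

theorem stmt_13 (E : Finset (Finset V))
    (huniform : ∀ e ∈ E, e.card = 3)
    (hlinear : ∀ e ∈ E, ∀ f ∈ E, e ≠ f → (e ∩ f).card ≤ 1)
    (U : SimpleGraph V) [DecidableRel U.Adj]
    (hU : ∀ u v : V, U.Adj u v ↔ u ≠ v ∧ ∃ e ∈ E, u ∈ e ∧ v ∈ e)
    (B : SimpleGraph ↥(bowPairs E)) [DecidableRel B.Adj]
    (hB : ∀ s t : ↥(bowPairs E), B.Adj s t ↔ IsBowAdj E ↑s ↑t) :
    (B.edgeFinset.card : ℤ) = 3 * triCount U - 3 * E.card := by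
  have h1 := tri_eq E huniform hlinear U hU
  have h2 := edge_card E B hB
  rw [h2, h1]
  push_cast
  ring
end

section
/- Let H be a linear 3-uniform hypergraph on n vertices with linear density d = 3e(H)/binom(n,2) > 0, such that d(n−1) > 1. Then the average degree of the bow-tie graph B of H satisfies d^avg(B) ≥ 16 − 8n/(d(n−1)−1). -/
/-!
Write `P = |B|`, `m = e(H)`, `n = |V|` and `d_v` for the vertex degrees, so that `∑ d_v = 3m` and,
by linearity, `∑ d_v² = 2P + 3m`. Let `{e, f}` be a bow-tie with `e ∩ f = {y}`. Each of the four
pairs `(x, z) ∈ (e \ f) × (f \ e)` is either covered by a third hyperedge `g`, which then meets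
`e` and `f` in one vertex each, away from `y`, and yields the two neighbours `{e, g}`, `{f, g}` of
`{e, f}` in `B`; or it is not, and then `x – y – z` is an induced path ("open cherry") of the
underlying graph. Counting both orientations gives `8P ≤ 2e(B) + W`, with `W` the number of
oriented open cherries. On the other hand, an open cherry is determined by `f ∋ z`, the vertex
`y ∈ f \ {z}` and a vertex `x` outside the closed neighbourhood of `z`, which has `1 + 2d_z`
vertices, so `W ≤ ∑ d_v · 2(n - 1 - 2d_v)`. Together, `16P + 18m ≤ 2e(B) + 6mn`. Since
`d(n - 1) = 6m/n`, Cauchy–Schwarz `(3m)² ≤ n(2P + 3m)` turns this into the stated bound.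
-/

open Finset

variable {V : Type*} [Fintype V] [DecidableEq V]

section Hypergraph

variable {α : Type*} [DecidableEq α]

def IsLinear (E : Finset (Finset α)) : Prop :=
  ∀ e ∈ E, ∀ f ∈ E, e ≠ f → #(e ∩ f) ≤ 1

def edgesThrough (E : Finset (Finset α)) (v : α) : Finset (Finset α) := {e ∈ E | v ∈ e}

def vertexDegree (E : Finset (Finset α)) (v : α) : ℕ := #(edgesThrough E v)

def closedNbhd (E : Finset (Finset α)) (z : α) : Finset α :=
  insert z ((edgesThrough E z).biUnion fun g => g.erase z)

variable {E : Finset (Finset α)} {k : ℕ}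

namespace IsLinear

lemma eq_of_mem_of_mem (hE : IsLinear E) {e f : Finset α} {x y : α} (he : e ∈ E) (hf : f ∈ E)
    (hxy : x ≠ y) (hxe : x ∈ e) (hye : y ∈ e) (hxf : x ∈ f) (hyf : y ∈ f) : e = f := by
  by_contra hne
  exact hxy (card_le_one.1 (hE e he f hf hne) x (mem_inter.2 ⟨hxe, hxf⟩) y (mem_inter.2 ⟨hye, hyf⟩))

lemma card_inter_eq_one (hE : IsLinear E) {e f : Finset α} {x : α} (he : e ∈ E) (hf : f ∈ E)
    (hne : e ≠ f) (hx : x ∈ e ∩ f) : #(e ∩ f) = 1 :=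
  le_antisymm (hE e he f hf hne) (card_pos.2 ⟨x, hx⟩)

end IsLinear

lemma mem_bowPairs_s16 {s : Finset (Finset α)} :
    s ∈ bowPairs E ↔ ∃ e ∈ E, ∃ f ∈ E, e ≠ f ∧ #(e ∩ f) = 1 ∧ s = {e, f} := by
  constructor
  · simp only [bowPairs, mem_filter, mem_powersetCard, card_eq_two]
    rintro ⟨⟨hsE, a, b, hab, rfl⟩, e, he, f, hf, hef, hcard⟩
    refine ⟨e, hsE he, f, hsE hf, hef, hcard, ?_⟩
    simp only [mem_insert, mem_singleton] at he hf
    rcases he with rfl | rfl <;> rcases hf with rfl | rfl <;> simp_all [pair_comm]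
  · rintro ⟨e, he, f, hf, hef, hcard, rfl⟩
    simp only [bowPairs, mem_filter, mem_powersetCard]
    exact ⟨⟨by simp [insert_subset_iff, he, hf], card_pair hef⟩, e, by simp, f, by simp, hef, hcard⟩

lemma card_closedNbhd (hk : ∀ e ∈ E, #e = k) (hE : IsLinear E) (z : α) :
    #(closedNbhd E z) = 1 + (k - 1) * vertexDegree E z := by
  have hdisj : (edgesThrough E z : Set (Finset α)).PairwiseDisjoint fun g => g.erase z := by
    intro g hg g' hg' hne
    simp only [edgesThrough, mem_coe, mem_filter] at hg hg'
    refine disjoint_left.2 fun w hw hw' => hne ?_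
    rw [mem_erase] at hw hw'
    exact hE.eq_of_mem_of_mem hg.1 hg'.1 hw.1 hw.2 hg.2 hw'.2 hg'.2
  have herase : ∀ g ∈ edgesThrough E z, #(g.erase z) = k - 1 := fun g hg => by
    rw [card_erase_of_mem (mem_filter.1 hg).2, hk g (mem_filter.1 hg).1]
  rw [closedNbhd, card_insert_of_notMem (by simp), card_biUnion hdisj, sum_congr rfl herase,
    sum_const, smul_eq_mul, vertexDegree, add_comm, mul_comm]

lemma notMem_closedNbhd {x z : α} (hxz : x ≠ z) (hcov : ¬∃ g ∈ E, x ∈ g ∧ z ∈ g) :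
    x ∉ closedNbhd E z := by
  simp only [closedNbhd, mem_insert, mem_biUnion, edgesThrough, mem_filter, mem_erase]
  rintro (h | ⟨g, ⟨hg, hzg⟩, -, hxg⟩)
  · exact hxz h
  · exact hcov ⟨g, hg, hxg, hzg⟩

end Hypergraph

section DegreeSums

variable {E : Finset (Finset V)} {k : ℕ}

lemma sum_sum_eq_sum_vertexDegree_smul {M : Type*} [AddCommMonoid M] (E : Finset (Finset V))
    (g : V → M) : ∑ f ∈ E, ∑ z ∈ f, g z = ∑ v, vertexDegree E v • g v := by
  rw [sum_comm' (t' := univ) (s' := edgesThrough E) (by simp [edgesThrough])]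
  simp [vertexDegree]

lemma sum_vertexDegree (hk : ∀ e ∈ E, #e = k) : ∑ v, vertexDegree E v = k * #E := by
  have h := sum_sum_eq_sum_vertexDegree_smul E fun _ => 1
  simp only [sum_const, smul_eq_mul, mul_one] at h
  rw [← h, sum_congr rfl hk, sum_const, smul_eq_mul, mul_comm]

lemma card_bowPairs (hE : IsLinear E) : #(bowPairs E) = ∑ v, (vertexDegree E v).choose 2 := by
  have hunion : bowPairs E = univ.biUnion fun v => (edgesThrough E v).powersetCard 2 := by
    ext s
    simp only [mem_bowPairs_s16, mem_biUnion, mem_univ, true_and, mem_powersetCard, card_eq_two]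
    constructor
    · rintro ⟨e, he, f, hf, hef, hcard, rfl⟩
      obtain ⟨y, hy⟩ := card_eq_one.1 hcard
      obtain ⟨hye, hyf⟩ : y ∈ e ∧ y ∈ f := mem_inter.1 (hy ▸ mem_singleton_self y)
      exact ⟨y, by simp [insert_subset_iff, edgesThrough, *], e, f, hef, rfl⟩
    · rintro ⟨v, hsub, e, f, hef, rfl⟩
      simp only [insert_subset_iff, singleton_subset_iff, edgesThrough, mem_filter] at hsub
      obtain ⟨⟨he, hve⟩, hf, hvf⟩ := hsub
      exact ⟨e, he, f, hf, hef, hE.card_inter_eq_one he hf hef (mem_inter.2 ⟨hve, hvf⟩), rfl⟩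
  rw [hunion, card_biUnion]
  · simp [vertexDegree, card_powersetCard]
  intro v _ w _ hvw
  simp only [Function.onFun, disjoint_left, mem_powersetCard, card_eq_two]
  rintro s ⟨hsv, e, f, hef, rfl⟩ ⟨hsw, -⟩
  simp only [insert_subset_iff, singleton_subset_iff, edgesThrough, mem_filter] at hsv hsw
  exact hef (hE.eq_of_mem_of_mem hsv.1.1 hsv.2.1 hvw hsv.1.2 hsw.1.2 hsv.2.2 hsw.2.2)

lemma sum_sq_vertexDegree (hk : ∀ e ∈ E, #e = k) (hE : IsLinear E) :
    ∑ v, vertexDegree E v ^ 2 = 2 * #(bowPairs E) + k * #E := by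
  rw [card_bowPairs hE, ← sum_vertexDegree hk, mul_sum, ← sum_add_distrib]
  refine sum_congr rfl fun v _ => ?_
  have h := Nat.cast_choose_two ℚ (vertexDegree E v)
  qify
  rw [h]
  ring

lemma sq_mul_card_le (hk : ∀ e ∈ E, #e = k) (hE : IsLinear E) :
    (k * #E) ^ 2 ≤ Fintype.card V * (2 * #(bowPairs E) + k * #E) := by
  rw [← sum_sq_vertexDegree hk hE, ← sum_vertexDegree hk, ← card_univ]
  exact sq_sum_le_card_mul_sum_sq

end DegreeSums

section BowTieGraph

variable {α : Type*} [DecidableEq α] {E : Finset (Finset α)} {k : ℕ}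

lemma pair_eq_pair_of_mem_of_notMem {s : Finset α} {a b c d : α} (ha : a ∈ s) (hb : b ∉ s)
    (hc : c ∈ s) (hd : d ∉ s) (h : ({a, b} : Finset α) = {c, d}) : a = c ∧ b = d := by
  have ha' : a ∈ ({c, d} : Finset α) := h ▸ mem_insert_self a _
  have hb' : b ∈ ({c, d} : Finset α) := h ▸ mem_insert_of_mem (mem_singleton_self b)
  simp only [mem_insert, mem_singleton] at ha' hb'
  refine ⟨ha'.resolve_right ?_, hb'.resolve_left ?_⟩ <;> rintro rfl <;> contradiction

lemma IsBowAdj.mem_bowPairs {s t : Finset (Finset α)} (h : IsBowAdj E s t) : t ∈ bowPairs E := by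
  obtain ⟨-, f, g, -, hf, hg, -, hfg, -, -, hcard, -, -, -, -, rfl⟩ := h
  exact _root_.mem_bowPairs_s16.2 ⟨f, hf, g, hg, hfg, hcard, rfl⟩

lemma card_le_degree (B : SimpleGraph (bowPairs E)) [DecidableRel B.Adj]
    (hB : ∀ s t : bowPairs E, B.Adj s t ↔ IsBowAdj E s t) {p : bowPairs E}
    {T : Finset (Finset (Finset α))} (hT : ∀ t ∈ T, IsBowAdj E p t) : #T ≤ B.degree p := by
  rw [← B.card_neighborFinset_eq_degree, ← card_map (Function.Embedding.subtype _)]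
  refine card_le_card fun t ht => mem_map.2 ⟨⟨t, (hT t ht).mem_bowPairs⟩, ?_, rfl⟩
  rw [SimpleGraph.mem_neighborFinset, hB]
  exact hT t ht

def triangleMates (E : Finset (Finset α)) (e f : Finset α) : Finset (Finset α) :=
  {g ∈ E | g ≠ e ∧ g ≠ f ∧ #(e ∩ g) = 1 ∧ #(f ∩ g) = 1 ∧ e ∩ f ∩ g = ∅}

lemma two_mul_card_triangleMates_le_degree (B : SimpleGraph (bowPairs E)) [DecidableRel B.Adj]
    (hB : ∀ s t : bowPairs E, B.Adj s t ↔ IsBowAdj E s t) {e f : Finset α} (he : e ∈ E)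
    (hf : f ∈ E) (hef : e ≠ f) (hcard : #(e ∩ f) = 1) {p : bowPairs E}
    (hp : (p : Finset (Finset α)) = {e, f}) : 2 * #(triangleMates E e f) ≤ B.degree p := by
  set φ : Finset α × Finset α → Finset (Finset α) := fun gh => {gh.2, gh.1}
  have hinj : Set.InjOn φ (triangleMates E e f ×ˢ {e, f} : Finset _) := by
    rintro ⟨g, h⟩ hgh ⟨g', h'⟩ hgh' heq
    simp only [triangleMates, coe_product, Set.mem_prod, mem_coe, mem_filter] at hgh hgh'
    have hg : g ∉ ({e, f} : Finset (Finset α)) := by simp [hgh.1.2.1, hgh.1.2.2.1]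
    have hg' : g' ∉ ({e, f} : Finset (Finset α)) := by simp [hgh'.1.2.1, hgh'.1.2.2.1]
    obtain ⟨rfl, rfl⟩ := pair_eq_pair_of_mem_of_notMem hgh.2 hg hgh'.2 hg' heq
    rfl
  calc 2 * #(triangleMates E e f) = #((triangleMates E e f ×ˢ {e, f}).image φ) := by
        rw [card_image_of_injOn hinj, card_product, card_pair hef, mul_comm]
    _ ≤ B.degree p := by
      refine card_le_degree B hB fun t ht => ?_
      obtain ⟨⟨g, h⟩, hgh, rfl⟩ := mem_image.1 ht
      simp only [triangleMates, mem_product, mem_filter, mem_insert, mem_singleton] at hgh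
      obtain ⟨⟨hg, hge, hgf, heg, hfg, hefg⟩, rfl | rfl⟩ := hgh
      · exact ⟨f, h, g, hf, he, hg, hef.symm, hge.symm, hgf.symm, by rwa [inter_comm], heg, hfg,
          by rwa [inter_comm f], hp.trans (pair_comm _ _), rfl⟩
      · exact ⟨e, h, g, he, hf, hg, hef, hgf.symm, hge.symm, hcard, hfg, heg, hefg, hp, rfl⟩

def coveredCrossPairs (E : Finset (Finset α)) (e f : Finset α) : Finset (α × α) :=
  {xz ∈ (e \ f) ×ˢ (f \ e) | ∃ g ∈ E, xz.1 ∈ g ∧ xz.2 ∈ g}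

def uncoveredCrossPairs (E : Finset (Finset α)) (e f : Finset α) : Finset (α × α) :=
  {xz ∈ (e \ f) ×ˢ (f \ e) | ¬∃ g ∈ E, xz.1 ∈ g ∧ xz.2 ∈ g}

lemma card_coveredCrossPairs_add_card_uncoveredCrossPairs (hk : ∀ e ∈ E, #e = k)
    {e f : Finset α} (he : e ∈ E) (hf : f ∈ E) (hcard : #(e ∩ f) = 1) :
    #(coveredCrossPairs E e f) + #(uncoveredCrossPairs E e f) = (k - 1) ^ 2 := by
  rw [coveredCrossPairs, uncoveredCrossPairs, card_filter_add_card_filter_not, card_product,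
    card_sdiff, card_sdiff, inter_comm f, hcard, hk e he, hk f hf, sq]

lemma mem_triangleMates_of_mem (hE : IsLinear E) {e f g : Finset α} {x z : α} (he : e ∈ E)
    (hf : f ∈ E) (hg : g ∈ E) (hxe : x ∈ e) (hxf : x ∉ f) (hzf : z ∈ f) (hze : z ∉ e)
    (hxg : x ∈ g) (hzg : z ∈ g) : g ∈ triangleMates E e f := by
  have hge : g ≠ e := by rintro rfl; exact hze hzg
  have hgf : g ≠ f := by rintro rfl; exact hxf hxg
  refine mem_filter.2 ⟨hg, hge, hgf, hE.card_inter_eq_one he hg hge.symm (mem_inter.2 ⟨hxe, hxg⟩),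
    hE.card_inter_eq_one hf hg hgf.symm (mem_inter.2 ⟨hzf, hzg⟩), ?_⟩
  refine eq_empty_of_forall_notMem fun y hy => ?_
  obtain ⟨⟨hye, hyf⟩, hyg⟩ := mem_inter.1 hy |>.imp_left mem_inter.1
  exact hge (hE.eq_of_mem_of_mem hg he (by rintro rfl; exact hxf hyf) hxg hyg hxe hye)

lemma card_coveredCrossPairs_le (hE : IsLinear E) {e f : Finset α} (he : e ∈ E) (hf : f ∈ E) :
    #(coveredCrossPairs E e f) ≤ #(triangleMates E e f) := by
  calc #(coveredCrossPairs E e f)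
      ≤ #((triangleMates E e f).biUnion fun g => (e ∩ g) ×ˢ (f ∩ g)) := by
        refine card_le_card fun ⟨x, z⟩ hxz => ?_
        simp only [coveredCrossPairs, mem_filter, mem_product, mem_sdiff] at hxz
        obtain ⟨⟨⟨hxe, hxf⟩, hzf, hze⟩, g, hg, hxg, hzg⟩ := hxz
        exact mem_biUnion.2 ⟨g, mem_triangleMates_of_mem hE he hf hg hxe hxf hzf hze hxg hzg,
          mem_product.2 ⟨mem_inter.2 ⟨hxe, hxg⟩, mem_inter.2 ⟨hzf, hzg⟩⟩⟩
    _ ≤ ∑ g ∈ triangleMates E e f, #((e ∩ g) ×ˢ (f ∩ g)) := card_biUnion_le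
    _ = #(triangleMates E e f) := by
        rw [card_eq_sum_ones]
        refine sum_congr rfl fun g hg => ?_
        obtain ⟨-, -, -, heg, hfg, -⟩ := mem_filter.1 hg
        rw [card_product, heg, hfg]

def orderedBowPairs (E : Finset (Finset α)) : Finset (Finset α × Finset α) :=
  {ef ∈ E ×ˢ E | ef.1 ≠ ef.2 ∧ #(ef.1 ∩ ef.2) = 1}

/-- `⟨(e, f), (x, z)⟩` encodes the induced path `x – y – z` of the underlying graph,
where `e ∩ f = {y}`. -/
def openCherries (E : Finset (Finset α)) : Finset (Σ _ : Finset α × Finset α, α × α) :=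
  (orderedBowPairs E).sigma fun ef => uncoveredCrossPairs E ef.1 ef.2

lemma two_mul_sq_le_degree_add_sum (hk : ∀ e ∈ E, #e = k) (hE : IsLinear E)
    (B : SimpleGraph (bowPairs E)) [DecidableRel B.Adj]
    (hB : ∀ s t : bowPairs E, B.Adj s t ↔ IsBowAdj E s t) (p : bowPairs E) :
    2 * (k - 1) ^ 2 ≤ B.degree p + ∑ ef ∈ orderedBowPairs E with {ef.1, ef.2} = (p : Finset _),
      #(uncoveredCrossPairs E ef.1 ef.2) := by
  obtain ⟨e, he, f, hf, hef, hcard, hp⟩ := mem_bowPairs_s16.1 p.2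
  have hcard' : #(f ∩ e) = 1 := by rwa [inter_comm]
  have hfiber : #(uncoveredCrossPairs E e f) + #(uncoveredCrossPairs E f e) ≤
      ∑ ef ∈ orderedBowPairs E with {ef.1, ef.2} = (p : Finset _),
        #(uncoveredCrossPairs E ef.1 ef.2) := by
    have hne : (e, f) ≠ (f, e) := fun h => hef (Prod.ext_iff.1 h).1
    rw [← sum_pair (f := fun ef => #(uncoveredCrossPairs E ef.1 ef.2)) hne]
    refine sum_le_sum_of_subset fun ef hef' => ?_
    simp only [mem_insert, mem_singleton] at hef'
    rcases hef' with rfl | rfl <;>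
      simp [orderedBowPairs, he, hf, hef, hef.symm, hcard, hcard', hp, pair_comm]
  have hsplit := card_coveredCrossPairs_add_card_uncoveredCrossPairs hk he hf hcard
  have hsplit' := card_coveredCrossPairs_add_card_uncoveredCrossPairs hk hf he hcard'
  have hcov := card_coveredCrossPairs_le hE he hf
  have hcov' := card_coveredCrossPairs_le hE hf he
  have hmates := two_mul_card_triangleMates_le_degree B hB he hf hef hcard hp
  have hmates' :=
    two_mul_card_triangleMates_le_degree B hB hf he hef.symm hcard' (hp.trans (pair_comm _ _))
  linarith

lemma two_mul_sq_mul_card_bowPairs_le (hk : ∀ e ∈ E, #e = k) (hE : IsLinear E)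
    (B : SimpleGraph (bowPairs E)) [DecidableRel B.Adj]
    (hB : ∀ s t : bowPairs E, B.Adj s t ↔ IsBowAdj E s t) :
    2 * (k - 1) ^ 2 * #(bowPairs E) ≤ 2 * #B.edgeFinset + #(openCherries E) := by
  have hmaps : ∀ ef ∈ orderedBowPairs E, ({ef.1, ef.2} : Finset _) ∈ bowPairs E := by
    intro ef hef
    simp only [orderedBowPairs, mem_filter, mem_product] at hef
    exact mem_bowPairs_s16.2 ⟨ef.1, hef.1.1, ef.2, hef.1.2, hef.2.1, hef.2.2, rfl⟩
  calc 2 * (k - 1) ^ 2 * #(bowPairs E) = ∑ _p : bowPairs E, 2 * (k - 1) ^ 2 := by simp [mul_comm]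
    _ ≤ ∑ p : bowPairs E, (B.degree p + ∑ ef ∈ orderedBowPairs E with {ef.1, ef.2} = (p : Finset _),
          #(uncoveredCrossPairs E ef.1 ef.2)) :=
        sum_le_sum fun p _ => two_mul_sq_le_degree_add_sum hk hE B hB p
    _ = 2 * #B.edgeFinset + #(openCherries E) := by
        rw [sum_add_distrib, B.sum_degrees_eq_twice_card_edges, openCherries, card_sigma,
          ← sum_fiberwise_of_maps_to hmaps, ← sum_coe_sort (bowPairs E)]

end BowTieGraph

section OpenCherries

variable {E : Finset (Finset V)} {k : ℕ}

lemma card_filter_openCherries_add_card_closedNbhd_le (hE : IsLinear E) {f : Finset V} {y z : V}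
    (hyf : y ∈ f) :
    #{q ∈ openCherries E | q.1.2 = f ∧ q.2.2 = z ∧ y ∈ q.1.1} + #(closedNbhd E z)
      ≤ Fintype.card V := by
  have hinj : #{q ∈ openCherries E | q.1.2 = f ∧ q.2.2 = z ∧ y ∈ q.1.1} ≤ #(closedNbhd E z)ᶜ := by
    refine card_le_card_of_injOn (fun q => q.2.1) ?_ ?_
    · rintro ⟨⟨e, f'⟩, ⟨x, z'⟩⟩ hq
      simp only [openCherries, orderedBowPairs, uncoveredCrossPairs, mem_coe, mem_sigma,
        mem_filter, mem_product, mem_sdiff] at hq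
      obtain ⟨⟨-, ⟨⟨hxe, -⟩, -, hze⟩, hcov⟩, -, rfl, -⟩ := hq
      exact mem_compl.2 (notMem_closedNbhd (fun h : x = _ => hze (h ▸ hxe)) hcov)
    · rintro ⟨⟨e, f₁⟩, ⟨x, z₁⟩⟩ hq ⟨⟨e', f₂⟩, ⟨x', z₂⟩⟩ hq' (rfl : x = x')
      simp only [openCherries, orderedBowPairs, uncoveredCrossPairs, mem_coe, mem_sigma,
        mem_filter, mem_product, mem_sdiff] at hq hq'
      obtain ⟨⟨⟨⟨he, -⟩, -⟩, ⟨⟨hxe, hxf⟩, -⟩, -⟩, rfl, rfl, hye⟩ := hq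
      obtain ⟨⟨⟨⟨he', -⟩, -⟩, ⟨⟨hxe', -⟩, -⟩, -⟩, rfl, rfl, hye'⟩ := hq'
      obtain rfl := hE.eq_of_mem_of_mem he he' (by rintro rfl; exact hxf hyf) hxe hye hxe' hye'
      rfl
  rw [card_compl] at hinj
  have := card_le_univ (closedNbhd E z)
  omega

lemma card_openCherries_add_le (hk : ∀ e ∈ E, #e = k) (hE : IsLinear E) :
    #(openCherries E) + (k - 1) * ∑ v, vertexDegree E v * #(closedNbhd E v)
      ≤ k * (k - 1) * #E * Fintype.card V := by
  set n := Fintype.card V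
  set S : Finset V → V → V → Finset (Σ _ : Finset V × Finset V, V × V) :=
    fun f z y => {q ∈ openCherries E | q.1.2 = f ∧ q.2.2 = z ∧ y ∈ q.1.1}
  have hcover :
      openCherries E ⊆ E.biUnion fun f => f.biUnion fun z => (f.erase z).biUnion (S f z) := by
    rintro ⟨⟨e, f⟩, ⟨x, z⟩⟩ hq
    have hq' := hq
    simp only [openCherries, orderedBowPairs, uncoveredCrossPairs, mem_sigma, mem_filter,
      mem_product, mem_sdiff] at hq'
    obtain ⟨⟨⟨-, hf⟩, -, hcard⟩, ⟨-, hzf, hze⟩, -⟩ := hq'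
    obtain ⟨y, hy⟩ := card_eq_one.1 hcard
    obtain ⟨hye, hyf⟩ := mem_inter.1 (hy ▸ mem_singleton_self y)
    simp only [mem_biUnion, mem_erase]
    exact ⟨f, hf, z, hzf, y, ⟨by rintro rfl; exact hze hye, hyf⟩, mem_filter.2 ⟨hq, rfl, rfl, hye⟩⟩
  have hfiber : ∀ f ∈ E, ∀ z ∈ f,
      ∑ y ∈ f.erase z, #(S f z y) + (k - 1) * #(closedNbhd E z) ≤ (k - 1) * n := by
    intro f hf z hz
    have hcard : #(f.erase z) = k - 1 := by rw [card_erase_of_mem hz, hk f hf]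
    calc ∑ y ∈ f.erase z, #(S f z y) + (k - 1) * #(closedNbhd E z)
        = ∑ y ∈ f.erase z, (#(S f z y) + #(closedNbhd E z)) := by
          rw [sum_add_distrib, sum_const, hcard, smul_eq_mul]
      _ ≤ ∑ _y ∈ f.erase z, n := sum_le_sum fun y hy =>
          card_filter_openCherries_add_card_closedNbhd_le hE (mem_of_mem_erase hy)
      _ = (k - 1) * n := by rw [sum_const, hcard, smul_eq_mul]
  calc #(openCherries E) + (k - 1) * ∑ v, vertexDegree E v * #(closedNbhd E v)
      = #(openCherries E) + ∑ f ∈ E, ∑ z ∈ f, (k - 1) * #(closedNbhd E z) := by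
        rw [sum_sum_eq_sum_vertexDegree_smul, mul_sum]
        simp only [smul_eq_mul, mul_left_comm]
    _ ≤ ∑ f ∈ E, ∑ z ∈ f, (∑ y ∈ f.erase z, #(S f z y) + (k - 1) * #(closedNbhd E z)) := by
        simp only [sum_add_distrib]
        gcongr
        exact (card_le_card hcover).trans <| card_biUnion_le.trans <| sum_le_sum fun f _ =>
          card_biUnion_le.trans <| sum_le_sum fun z _ => card_biUnion_le
    _ ≤ ∑ f ∈ E, ∑ _z ∈ f, (k - 1) * n := sum_le_sum fun f hf => sum_le_sum (hfiber f hf)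
    _ = k * (k - 1) * #E * n := by
        rw [sum_congr rfl fun f hf => by rw [sum_const, hk f hf, smul_eq_mul], sum_const,
          smul_eq_mul]
        ring

end OpenCherries

lemma sixteen_mul_card_bowPairs_add_le {E : Finset (Finset V)} (h3 : ∀ e ∈ E, #e = 3)
    (hE : IsLinear E) (B : SimpleGraph (bowPairs E)) [DecidableRel B.Adj]
    (hB : ∀ s t : bowPairs E, B.Adj s t ↔ IsBowAdj E s t) :
    16 * #(bowPairs E) + 18 * #E ≤ 2 * #B.edgeFinset + 6 * #E * Fintype.card V := by
  have hlower := two_mul_sq_mul_card_bowPairs_le h3 hE B hB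
  have hupper := card_openCherries_add_le h3 hE
  have hnbhd : ∑ v, vertexDegree E v * #(closedNbhd E v) = 4 * #(bowPairs E) + 9 * #E := by
    have hv : ∀ v, vertexDegree E v * #(closedNbhd E v)
        = vertexDegree E v + 2 * vertexDegree E v ^ 2 := fun v => by
      rw [card_closedNbhd h3 hE]; ring
    rw [sum_congr rfl fun v _ => hv v, sum_add_distrib, ← mul_sum, sum_vertexDegree h3,
      sum_sq_vertexDegree h3 hE]
    ring
  rw [hnbhd] at hupper
  norm_num at hlower hupper
  linarith

lemma sixteen_sub_le_div {n m P e : ℝ} (hn : 0 < n) (hP : 0 < P) (he : 0 ≤ e) (hmn : n < 6 * m)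
    (hcount : 16 * P + 18 * m ≤ 2 * e + 6 * m * n) (hCS : (3 * m) ^ 2 ≤ n * (2 * P + 3 * m)) :
    16 - 8 * n / (6 * m / n - 1) ≤ 2 * e / P := by
  have hD : 0 < 6 * m - n := by linarith
  have hrw : 8 * n / (6 * m / n - 1) = 8 * n ^ 2 / (6 * m - n) := by
    rw [div_sub_one hn.ne']
    field_simp
  rw [hrw]
  rcases le_or_gt (2 * (6 * m - n)) (n ^ 2) with hsmall | hlarge
  · have : 16 ≤ 8 * n ^ 2 / (6 * m - n) := by rw [le_div_iff₀ hD]; linarith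
    have : 0 ≤ 2 * e / P := by positivity
    linarith
  · have hm : 0 ≤ m := by linarith
    have key : 6 * m * (n - 3) ≤ 8 * n ^ 2 * P / (6 * m - n) := by
      rw [le_div_iff₀ hD]
      -- `4n · hCS` gives `8n²P ≥ 12mn(3m - n)`, which exceeds the left side by `6m(18m - n² - 3n)`.
      nlinarith [mul_le_mul_of_nonneg_left hCS (by positivity : (0 : ℝ) ≤ 4 * n),
        mul_nonneg hm (by linarith : (0 : ℝ) ≤ 18 * m - n ^ 2 - 3 * n)]
    rw [le_div_iff₀ hP]
    calc (16 - 8 * n ^ 2 / (6 * m - n)) * P = 16 * P - 8 * n ^ 2 * P / (6 * m - n) := by ring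
      _ ≤ 2 * e := by linarith

theorem stmt_16_general (E : Finset (Finset V)) (d : ℝ)
    (huniform : ∀ e ∈ E, e.card = 3)
    (hlinear : ∀ e ∈ E, ∀ f ∈ E, e ≠ f → (e ∩ f).card ≤ 1)
    (hn : 2 ≤ Fintype.card V)
    (hpairs : (bowPairs E).Nonempty)
    (hd : d = (3 * E.card : ℝ) / ((Fintype.card V).choose 2))
    (hd1 : d * ((Fintype.card V : ℝ) - 1) > 1)
    (B : SimpleGraph ↥(bowPairs E)) [DecidableRel B.Adj]
    (hB : ∀ s t : ↥(bowPairs E), B.Adj s t ↔ IsBowAdj E ↑s ↑t) :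
    2 * (B.edgeFinset.card : ℝ) / (bowPairs E).card ≥
      16 - 8 * (Fintype.card V : ℝ) / (d * ((Fintype.card V : ℝ) - 1) - 1) := by
  have hcount :
      (16 * #(bowPairs E) + 18 * #E : ℝ) ≤ 2 * #B.edgeFinset + 6 * #E * Fintype.card V := by
    exact_mod_cast sixteen_mul_card_bowPairs_add_le huniform hlinear B hB
  have hCS : ((3 * #E) ^ 2 : ℝ) ≤ Fintype.card V * (2 * #(bowPairs E) + 3 * #E) := by
    exact_mod_cast sq_mul_card_le huniform hlinear
  have hn2 : (2 : ℝ) ≤ Fintype.card V := by exact_mod_cast hn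
  have hn0 : (0 : ℝ) < Fintype.card V := by linarith
  have hdn : d * ((Fintype.card V : ℝ) - 1) = 6 * #E / Fintype.card V := by
    rw [hd, Nat.cast_choose_two]
    field_simp [show (Fintype.card V : ℝ) - 1 ≠ 0 by linarith]
    ring
  rw [hdn, gt_iff_lt, one_lt_div hn0] at hd1
  rw [hdn]
  exact sixteen_sub_le_div hn0 (by exact_mod_cast card_pos.2 hpairs) (Nat.cast_nonneg _) hd1
    hcount hCS

theorem stmt_16 (E : Finset (Finset V)) (d : ℝ)
    (huniform : ∀ e ∈ E, e.card = 3)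
    (hlinear : ∀ e ∈ E, ∀ f ∈ E, e ≠ f → (e ∩ f).card ≤ 1)
    (hn : 2 ≤ Fintype.card V)
    (hpairs : (bowPairs E).Nonempty)
    (hd : d = (3 * E.card : ℝ) / ((Fintype.card V).choose 2))
    (hd0 : 0 < d)
    (hd1 : d * ((Fintype.card V : ℝ) - 1) > 1)
    (B : SimpleGraph ↥(bowPairs E)) [DecidableRel B.Adj]
    (hB : ∀ s t : ↥(bowPairs E), B.Adj s t ↔ IsBowAdj E ↑s ↑t) :
    2 * (B.edgeFinset.card : ℝ) / (bowPairs E).card ≥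
      16 - 8 * (Fintype.card V : ℝ) / (d * ((Fintype.card V : ℝ) - 1) - 1) :=
  stmt_16_general E d huniform hlinear hn hpairs hd hd1 B hB
end
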